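/- arXiv:1309.0264 — 11 statements merged into one kernel-verified Lean document; each statement's English description precedes it below -/
import Mathlib

section
/- For every β ∈ [β_cr, 2π] there exists a unique c = c_β ∈ (0, 1/4] solving the Hardy-constant equation for β; the function β ↦ c_β is C^∞ and strictly decreasing on [β_cr, 2π]; in particular c_{β_cr} = 1/4 and c_{2π} < c_β < 1/4 for every β with β_cr < β < 2π. -/
open Real Set

/-- `c` solves the Hardy-constant equation for the angle `β`. -/
def hardyEq (c β : ℝ) : Prop :=
  Real.sqrt c * Real.tan (Real.sqrt c * ((β - Real.pi) / 2)) =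
    2 * (Real.Gamma ((3 + Real.sqrt (1 - 4 * c)) / 4) /
         Real.Gamma ((1 + Real.sqrt (1 - 4 * c)) / 4)) ^ 2

/-- `βcr` is the critical angle: the unique angle in `(π, 2π)` with
`tan((βcr − π)/4) = 4 (Γ(3/4)/Γ(1/4))²`. -/
def isBetaCr (βcr : ℝ) : Prop :=
  βcr ∈ Set.Ioo Real.pi (2 * Real.pi) ∧
    Real.tan ((βcr - Real.pi) / 4) = 4 * (Real.Gamma (3 / 4) / Real.Gamma (1 / 4)) ^ 2

open Filter Topology

noncomputable section

/-- The Gamma-quotient appearing on the RHS of the Hardy equation. -/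
def Gr (s : ℝ) : ℝ := Real.Gamma ((3 + s) / 4) / Real.Gamma ((1 + s) / 4)

lemma Gr_pos {s : ℝ} (hs : -1 < s) : 0 < Gr s := by
  apply div_pos <;> apply Real.Gamma_pos_of_pos <;> linarith

lemma contDiffAt_Gamma {x : ℝ} (hx : 0 < x) : ContDiffAt ℝ (⊤ : ℕ∞) Real.Gamma x := by
  have hC : ContDiffAt ℝ (⊤ : ℕ∞) Complex.Gamma (x : ℂ) := by
    have han : AnalyticAt ℂ Complex.Gamma (x : ℂ) := by
      have hdo : DifferentiableOn ℂ Complex.Gamma {s : ℂ | 0 < s.re} := by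
        intro s hs
        refine (Complex.differentiableAt_Gamma s fun m => ?_).differentiableWithinAt
        intro h
        rw [h] at hs
        simp only [Set.mem_setOf_eq] at hs
        have h2 : ((-m : ℂ)).re = -(m : ℝ) := by simp
        rw [h2] at hs
        have : (0:ℝ) ≤ m := Nat.cast_nonneg m
        linarith
      exact hdo.analyticAt (IsOpen.mem_nhds (isOpen_lt continuous_const Complex.continuous_re)
        (by simpa using hx))
    exact (han.contDiffAt).restrict_scalars ℝ
  have h0 : ContDiffAt ℝ (⊤ : ℕ∞) (fun y : ℝ => (Complex.Gamma (y : ℂ)).re) x :=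
    Complex.reCLM.contDiff.contDiffAt.comp x (hC.comp x Complex.ofRealCLM.contDiff.contDiffAt)
  exact h0

lemma contDiffAt_affine4 (a : ℝ) {s : ℝ} : ContDiffAt ℝ (⊤ : ℕ∞) (fun x : ℝ => (a + x) / 4) s :=
  ((contDiff_const.add contDiff_id).div_const 4).contDiffAt

lemma contDiffAt_Gr {s : ℝ} (hs : -1 < s) : ContDiffAt ℝ (⊤ : ℕ∞) Gr s := by
  have h1 : ContDiffAt ℝ (⊤ : ℕ∞) (fun s : ℝ => Real.Gamma ((3 + s) / 4)) s :=
    ContDiffAt.comp (g := Real.Gamma) s (contDiffAt_Gamma (x := (3 + s)/4) (by linarith)) (contDiffAt_affine4 3)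
  have h2 : ContDiffAt ℝ (⊤ : ℕ∞) (fun s : ℝ => Real.Gamma ((1 + s) / 4)) s :=
    ContDiffAt.comp (g := Real.Gamma) s (contDiffAt_Gamma (x := (1 + s)/4) (by linarith)) (contDiffAt_affine4 1)
  exact h1.div h2 (Real.Gamma_pos_of_pos (by linarith)).ne'

lemma continuousAt_Gr {s : ℝ} (hs : -1 < s) : ContinuousAt Gr s :=
  (contDiffAt_Gr hs).continuousAt


def lg : ℝ → ℝ := Real.log ∘ Real.Gamma

lemma Gamma_ne_neg_nat {x : ℝ} (hx : 0 < x) : ∀ m : ℕ, x ≠ -(m:ℝ) := by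
  intro m
  have : (0:ℝ) ≤ m := m.cast_nonneg
  intro h; rw [h] at hx; linarith

lemma hasDerivAt_lg {x : ℝ} (hx : 0 < x) :
    HasDerivAt lg (deriv Real.Gamma x / Real.Gamma x) x := by
  have hd : DifferentiableAt ℝ Real.Gamma x := Real.differentiableAt_Gamma (Gamma_ne_neg_nat hx)
  exact hd.hasDerivAt.log (Real.Gamma_pos_of_pos hx).ne'

lemma diffAt_lg {x : ℝ} (hx : 0 < x) : DifferentiableAt ℝ lg x :=
  (hasDerivAt_lg hx).differentiableAt

lemma convexOn_lg : ConvexOn ℝ (Ioi 0) lg := Real.convexOn_log_Gamma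

lemma lg_eq (x : ℝ) : lg x = Real.log (Real.Gamma x) := rfl

lemma exp_lg {x : ℝ} (hx : 0 < x) : Real.exp (lg x) = Real.Gamma x :=
  Real.exp_log (Real.Gamma_pos_of_pos hx)

lemma deriv_lg_mono {x y : ℝ} (hx : 0 < x) (hxy : x < y) : deriv lg x ≤ deriv lg y := by
  have hy : 0 < y := hx.trans hxy
  calc deriv lg x ≤ slope lg x y :=
        convexOn_lg.deriv_le_slope hx hy hxy (diffAt_lg hx)
    _ ≤ deriv lg y := convexOn_lg.slope_le_deriv hx hy hxy (diffAt_lg hy)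

lemma two_lg_half_lt : 2 * lg (1/2) < lg (1/4) + lg (3/4) := by
  have h14 : (0:ℝ) < Real.Gamma (1/4) := Real.Gamma_pos_of_pos (by norm_num)
  have h34 : (0:ℝ) < Real.Gamma (3/4) := Real.Gamma_pos_of_pos (by norm_num)
  have hmul : Real.Gamma (1/4) * Real.Gamma (3/4) = Real.sqrt 2 * Real.pi := by
    have := Real.Gamma_mul_Gamma_one_sub (1/4)
    norm_num at this
    rw [show π * (1/4) = π/4 by ring, Real.sin_pi_div_four] at this
    rw [this]
    rw [div_eq_iff (by positivity)]
    have h2 : Real.sqrt 2 * Real.sqrt 2 = 2 := Real.mul_self_sqrt (by norm_num)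
    ring_nf
    nlinarith [Real.pi_pos]
  have hsq : Real.Gamma (1/2) ^ 2 = Real.pi := by
    rw [Real.Gamma_one_half_eq]; exact Real.sq_sqrt Real.pi_pos.le
  have h1 : 2 * lg (1/2) = Real.log (Real.Gamma (1/2) ^ 2) := by
    rw [lg_eq, Real.log_pow]; push_cast; ring
  have h2 : lg (1/4) + lg (3/4) = Real.log (Real.Gamma (1/4) * Real.Gamma (3/4)) := by
    rw [lg_eq, lg_eq, Real.log_mul h14.ne' h34.ne']
  rw [h1, h2, hsq, hmul]
  apply Real.log_lt_log Real.pi_pos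
  have h12 : 1 < Real.sqrt 2 := by
    nlinarith [Real.sq_sqrt (show (0:ℝ) ≤ 2 by norm_num), Real.sqrt_nonneg 2]
  nlinarith [Real.pi_pos]

lemma deriv_lg_quarter_lt : deriv lg (1/4) < deriv lg (3/4) := by
  have hA : deriv lg (1/4) ≤ slope lg (1/4) (1/2) :=
    convexOn_lg.deriv_le_slope (by norm_num) (by norm_num) (by norm_num)
      (diffAt_lg (by norm_num))
  have hB : slope lg (1/2) (3/4) ≤ deriv lg (3/4) :=
    convexOn_lg.slope_le_deriv (by norm_num) (by norm_num) (by norm_num)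
      (diffAt_lg (by norm_num))
  have hC : slope lg (1/4) (1/2) < slope lg (1/2) (3/4) := by
    rw [slope_def_field, slope_def_field]
    have := two_lg_half_lt
    rw [div_lt_div_iff₀ (by norm_num) (by norm_num)]
    ring_nf
    linarith
  linarith

lemma Gr_mono {s t : ℝ} (hs : -1 < s) (hst : s ≤ t) (h2 : t < s + 2) : Gr s ≤ Gr t := by
  rcases eq_or_lt_of_le hst with rfl | hlt
  · exact le_rfl
  set x1 := (1 + s) / 4 with hx1
  set x2 := (1 + t) / 4 with hx2
  set y1 := (3 + s) / 4 with hy1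
  set y2 := (3 + t) / 4 with hy2
  have hx1p : (0:ℝ) < x1 := by rw [hx1]; linarith
  have hx2p : (0:ℝ) < x2 := by rw [hx2]; linarith
  have hy1p : (0:ℝ) < y1 := by rw [hy1]; linarith
  have hy2p : (0:ℝ) < y2 := by rw [hy2]; linarith
  have h12 : x1 < x2 := by rw [hx1, hx2]; linarith
  have h2y : x2 < y2 := by rw [hx2, hy2]; linarith
  have hx1y1 : x1 < y1 := by rw [hx1, hy1]; linarith
  have hy12 : y1 < y2 := by rw [hy1, hy2]; linarith
  have hx2y1 : x2 ≤ y1 := by rw [hx2, hy1]; linarith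
  -- slope lg x1 x2 ≤ slope lg x1 y2
  have hm1 : slope lg x1 x2 ≤ slope lg x1 y2 := by
    have := (convexOn_lg.slope_mono (mem_Ioi.2 hx1p))
    exact this ⟨mem_Ioi.2 hx2p, by simp [h12.ne']⟩ ⟨mem_Ioi.2 hy2p, by simp [(h12.trans h2y).ne']⟩
      (h2y.le.trans' le_rfl)
  have hm2 : slope lg x1 y2 ≤ slope lg y1 y2 := by
    rw [slope_comm lg x1 y2, slope_comm lg y1 y2]
    have := (convexOn_lg.slope_mono (mem_Ioi.2 hy2p))
    exact this ⟨mem_Ioi.2 hx1p, by simp [(h12.trans h2y).ne]⟩ ⟨mem_Ioi.2 hy1p, by simp [hy12.ne]⟩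
      (hx2y1.trans' h12.le)
  have hslope : slope lg x1 x2 ≤ slope lg y1 y2 := hm1.trans hm2
  rw [slope_def_field, slope_def_field] at hslope
  have hden : x2 - x1 = y2 - y1 := by rw [hx1, hx2, hy1, hy2]; ring
  have hdenp : (0:ℝ) < x2 - x1 := by linarith
  rw [hden] at hslope
  have hkey : lg x2 + lg y1 ≤ lg x1 + lg y2 := by
    rw [div_le_div_iff_of_pos_right (by linarith : (0:ℝ) < y2 - y1)] at hslope
    linarith
  have hexp : Real.Gamma x2 * Real.Gamma y1 ≤ Real.Gamma x1 * Real.Gamma y2 := by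
    have := Real.exp_le_exp.mpr hkey
    rwa [Real.exp_add, Real.exp_add, exp_lg hx1p, exp_lg hx2p, exp_lg hy1p, exp_lg hy2p] at this
  show Real.Gamma y1 / Real.Gamma x1 ≤ Real.Gamma y2 / Real.Gamma x2
  rw [div_le_div_iff₀ (Real.Gamma_pos_of_pos hx1p) (Real.Gamma_pos_of_pos hx2p)]
  nlinarith [Real.Gamma_pos_of_pos hx1p, Real.Gamma_pos_of_pos hx2p]


/-- The defect function: `Φ β c = LHS - RHS` of the Hardy equation. -/
def Phi (β c : ℝ) : ℝ :=
  Real.sqrt c * Real.tan (Real.sqrt c * ((β - π) / 2)) - 2 * (Gr (Real.sqrt (1 - 4 * c))) ^ 2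

lemma hardyEq_iff_Phi {c β : ℝ} : hardyEq c β ↔ Phi β c = 0 := by
  unfold hardyEq Phi Gr
  rw [sub_eq_zero]

lemma sqrt_le_half {c : ℝ} (hc : c ≤ 1/4) : Real.sqrt c ≤ 1/2 := by
  have h : Real.sqrt c ≤ Real.sqrt (1/4) := Real.sqrt_le_sqrt hc
  rwa [show (1/4:ℝ) = (1/2)^2 by norm_num, Real.sqrt_sq (by norm_num : (0:ℝ) ≤ 1/2)] at h

lemma arg_mem {c t : ℝ} (hc0 : 0 ≤ c) (hc : c ≤ 1/4) (ht0 : 0 ≤ t) (ht : t ≤ π/2) :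
    0 ≤ Real.sqrt c * t ∧ Real.sqrt c * t < π/2 := by
  constructor
  · exact mul_nonneg (Real.sqrt_nonneg c) ht0
  · have h1 : Real.sqrt c * t ≤ (1/2) * (π/2) :=
      mul_le_mul (sqrt_le_half hc) ht ht0 (by norm_num)
    have := Real.pi_pos
    linarith

/-- Strict monotonicity in `c` of the LHS. -/
lemma L_strictMono {t c1 c2 : ℝ} (ht0 : 0 < t) (ht : t ≤ π/2)
    (h0 : 0 ≤ c1) (h12 : c1 < c2) (h2 : c2 ≤ 1/4) :
    Real.sqrt c1 * Real.tan (Real.sqrt c1 * t) < Real.sqrt c2 * Real.tan (Real.sqrt c2 * t) := by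
  have hs12 : Real.sqrt c1 < Real.sqrt c2 := Real.sqrt_lt_sqrt h0 h12
  have hs2pos : 0 < Real.sqrt c2 := Real.sqrt_pos.2 (h0.trans_lt h12)
  have ha1 := arg_mem h0 (h12.le.trans h2) ht0.le ht
  have ha2 := arg_mem (h0.trans h12.le) h2 ht0.le ht
  have harg : Real.sqrt c1 * t < Real.sqrt c2 * t := by
    exact mul_lt_mul_of_pos_right hs12 ht0
  have htan : Real.tan (Real.sqrt c1 * t) < Real.tan (Real.sqrt c2 * t) :=
    Real.tan_lt_tan_of_nonneg_of_lt_pi_div_two ha1.1 ha2.2 harg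
  have htan2 : 0 < Real.tan (Real.sqrt c2 * t) :=
    Real.tan_pos_of_pos_of_lt_pi_div_two (mul_pos hs2pos ht0) ha2.2
  have htan1 : 0 ≤ Real.tan (Real.sqrt c1 * t) := by
    rcases eq_or_lt_of_le ha1.1 with h | h
    · rw [← h, Real.tan_zero]
    · exact (Real.tan_pos_of_pos_of_lt_pi_div_two h ha1.2).le
  calc Real.sqrt c1 * Real.tan (Real.sqrt c1 * t)
      ≤ Real.sqrt c1 * Real.tan (Real.sqrt c2 * t) :=
        mul_le_mul_of_nonneg_left htan.le (Real.sqrt_nonneg c1)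
    _ < Real.sqrt c2 * Real.tan (Real.sqrt c2 * t) :=
        mul_lt_mul_of_pos_right hs12 htan2

/-- Antitonicity in `c` of the RHS. -/
lemma R_anti {c1 c2 : ℝ} (h0 : 0 ≤ c1) (h12 : c1 ≤ c2) (h2 : c2 ≤ 1/4) :
    2 * (Gr (Real.sqrt (1 - 4 * c2))) ^ 2 ≤ 2 * (Gr (Real.sqrt (1 - 4 * c1))) ^ 2 := by
  set s2 := Real.sqrt (1 - 4 * c2) with hs2
  set s1 := Real.sqrt (1 - 4 * c1) with hs1
  have hs2n : 0 ≤ s2 := Real.sqrt_nonneg _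
  have hs1le : s1 ≤ 1 := by
    rw [hs1]
    have h := Real.sqrt_le_sqrt (show 1 - 4*c1 ≤ 1 by linarith)
    rwa [Real.sqrt_one] at h
  have hmono : s2 ≤ s1 := Real.sqrt_le_sqrt (by linarith)
  have hG : Gr s2 ≤ Gr s1 := Gr_mono (by linarith) hmono (by linarith)
  have hGpos : 0 < Gr s2 := Gr_pos (by linarith)
  nlinarith

/-- Strict monotonicity of `Phi β` in `c` on `[0, 1/4]`. -/
lemma Phi_strictMonoOn {β : ℝ} (hβ1 : π < β) (hβ2 : β ≤ 2*π) :
    StrictMonoOn (Phi β) (Icc 0 (1/4)) := by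
  intro c1 hc1 c2 hc2 h12
  have ht0 : 0 < (β - π)/2 := by linarith
  have ht : (β - π)/2 ≤ π/2 := by linarith
  have hL := L_strictMono ht0 ht hc1.1 h12 hc2.2
  have hR := R_anti hc1.1 h12.le hc2.2
  unfold Phi
  linarith

lemma cos_arg_pos {c t : ℝ} (hc0 : 0 ≤ c) (hc : c ≤ 1/4) (ht0 : 0 ≤ t) (ht : t ≤ π/2) :
    Real.cos (Real.sqrt c * t) ≠ 0 := by
  have h := arg_mem hc0 hc ht0 ht
  have := Real.pi_pos
  exact (Real.cos_pos_of_mem_Ioo ⟨by linarith [h.1], h.2⟩).ne'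

/-- Continuity of `Phi β` in `c` on `[0, 1/4]`. -/
lemma Phi_continuousOn {β : ℝ} (hβ1 : π < β) (hβ2 : β ≤ 2*π) :
    ContinuousOn (fun c => Phi β c) (Icc 0 (1/4)) := by
  have ht0 : 0 ≤ (β - π)/2 := by linarith
  have ht : (β - π)/2 ≤ π/2 := by linarith
  intro c hc
  apply ContinuousWithinAt.sub
  · apply ContinuousWithinAt.mul
    · exact (Real.continuous_sqrt.continuousAt).continuousWithinAt
    · apply ContinuousAt.continuousWithinAt
      have hin : ContinuousAt (fun c : ℝ => Real.sqrt c * ((β - π)/2)) c :=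
        (Real.continuous_sqrt.continuousAt).mul continuousAt_const
      exact ContinuousAt.comp (g := Real.tan)
        (Real.continuousAt_tan.2 (cos_arg_pos hc.1 hc.2 ht0 ht)) hin
  · apply ContinuousAt.continuousWithinAt
    have hs : (0:ℝ) ≤ Real.sqrt (1 - 4*c) := Real.sqrt_nonneg _
    apply ContinuousAt.mul continuousAt_const
    apply ContinuousAt.pow
    apply ContinuousAt.comp (continuousAt_Gr (by linarith))
    exact Real.continuous_sqrt.continuousAt.comp (by fun_prop)

/-- Continuity of `Phi · c` in `β`. -/
lemma Phi_continuousAt_beta {c β : ℝ} (hc0 : 0 ≤ c) (hc : c ≤ 1/4) (hβ1 : π < β)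
    (hβ2 : β ≤ 2*π) : ContinuousAt (fun β' => Phi β' c) β := by
  unfold Phi
  apply ContinuousAt.sub _ continuousAt_const
  apply ContinuousAt.mul continuousAt_const
  have hin : ContinuousAt (fun β' : ℝ => Real.sqrt c * ((β' - π)/2)) β := by fun_prop
  exact ContinuousAt.comp (g := Real.tan)
    (Real.continuousAt_tan.2 (cos_arg_pos hc0 hc (by linarith) (by linarith))) hin

lemma Phi_at_zero {β : ℝ} : Phi β 0 < 0 := by
  have h1 : Gr 1 > 0 := Gr_pos (by norm_num)
  unfold Phi
  rw [Real.sqrt_zero]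
  norm_num
  nlinarith

lemma Phi_at_quarter {β : ℝ} :
    Phi β (1/4) = 1/2 * Real.tan ((β - π)/4) - 2 * (Gr 0)^2 := by
  unfold Phi
  rw [show (1 : ℝ) - 4 * (1/4) = 0 by norm_num, Real.sqrt_zero,
    show (1/4 : ℝ) = (1/2)^2 by norm_num, Real.sqrt_sq (by norm_num : (0:ℝ) ≤ 1/2)]
  ring_nf


lemma Gr_zero_eq : Gr 0 = Real.Gamma (3/4) / Real.Gamma (1/4) := by
  unfold Gr; norm_num

lemma Phi_lt_beta {c β1 β2 : ℝ} (hc : 0 < c) (hc2 : c ≤ 1/4) (hβ1 : π < β1)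
    (h12 : β1 < β2) (hβ2 : β2 ≤ 2*π) : Phi β1 c < Phi β2 c := by
  have hsc : 0 < Real.sqrt c := Real.sqrt_pos.2 hc
  have ha1 := arg_mem hc.le hc2 (by linarith : (0:ℝ) ≤ (β1 - π)/2) (by linarith)
  have ha2 := arg_mem hc.le hc2 (by linarith : (0:ℝ) ≤ (β2 - π)/2) (by linarith)
  have harg : Real.sqrt c * ((β1 - π)/2) < Real.sqrt c * ((β2 - π)/2) :=
    mul_lt_mul_of_pos_left (by linarith) hsc
  have htan := Real.tan_lt_tan_of_nonneg_of_lt_pi_div_two ha1.1 ha2.2 harg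
  unfold Phi
  have := mul_lt_mul_of_pos_left htan hsc
  linarith

section Crit

variable {βcr : ℝ} (hβcr : isBetaCr βcr)

lemma Phi_crit_quarter (hβcr : isBetaCr βcr) : Phi βcr (1/4) = 0 := by
  rw [Phi_at_quarter, hβcr.2, Gr_zero_eq]
  ring

lemma Phi_quarter_nonneg (hβcr : isBetaCr βcr) {β : ℝ} (hβ : β ∈ Icc βcr (2*π)) :
    0 ≤ Phi β (1/4) := by
  rcases eq_or_lt_of_le hβ.1 with rfl | hlt
  · rw [Phi_crit_quarter hβcr]
  · have hπ := hβcr.1.1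
    have ha1 : (0:ℝ) ≤ (βcr - π)/4 := by linarith
    have ha2 : (β - π)/4 < π/2 := by linarith [hβ.2, Real.pi_pos]
    have htan := Real.tan_lt_tan_of_nonneg_of_lt_pi_div_two ha1 ha2 (by linarith)
    have h0 := Phi_crit_quarter hβcr
    rw [Phi_at_quarter] at h0 ⊢
    linarith

lemma existsUnique_Phi_root (hβcr : isBetaCr βcr) {β : ℝ} (hβ : β ∈ Icc βcr (2*π)) :
    ∃! c : ℝ, c ∈ Ioc (0:ℝ) (1/4) ∧ Phi β c = 0 := by
  have hπβ : π < β := lt_of_lt_of_le hβcr.1.1 hβ.1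
  have hβ2 : β ≤ 2*π := hβ.2
  have hIVT := intermediate_value_Icc (by norm_num : (0:ℝ) ≤ 1/4)
    (Phi_continuousOn hπβ hβ2)
  have h0 : (0:ℝ) ∈ Icc (Phi β 0) (Phi β (1/4)) :=
    ⟨Phi_at_zero.le, Phi_quarter_nonneg hβcr hβ⟩
  obtain ⟨c, hcmem, hc⟩ := hIVT h0
  simp only [] at hc
  have hcne : c ≠ 0 := by
    intro h; rw [h] at hc; exact absurd hc Phi_at_zero.ne
  refine ⟨c, ⟨⟨lt_of_le_of_ne hcmem.1 (Ne.symm hcne), hcmem.2⟩, hc⟩, ?_⟩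
  rintro y ⟨hymem, hy⟩
  exact (Phi_strictMonoOn hπβ hβ2).injOn (Ioc_subset_Icc_self hymem)
    (Ioc_subset_Icc_self ⟨lt_of_le_of_ne hcmem.1 (Ne.symm hcne), hcmem.2⟩) (by show Phi β y = Phi β c; rw [hy, hc])

lemma existsUnique_hardy (hβcr : isBetaCr βcr) {β : ℝ} (hβ : β ∈ Icc βcr (2*π)) :
    ∃! c : ℝ, c ∈ Ioc (0:ℝ) (1/4) ∧ hardyEq c β := by
  obtain ⟨c, ⟨hc1, hc2⟩, hu⟩ := existsUnique_Phi_root hβcr hβ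
  exact ⟨c, ⟨hc1, hardyEq_iff_Phi.2 hc2⟩, fun y hy => hu y ⟨hy.1, hardyEq_iff_Phi.1 hy.2⟩⟩

end Crit

section FFacts

variable {βcr : ℝ} {F : ℝ → ℝ}

lemma F_crit (hβcr : isBetaCr βcr)
    (hF : ∀ β ∈ Icc βcr (2*π), F β ∈ Ioc (0:ℝ) (1/4) ∧ hardyEq (F β) β) :
    F βcr = 1/4 := by
  have hmem : βcr ∈ Icc βcr (2*π) := ⟨le_refl _, hβcr.1.2.le⟩
  obtain ⟨c, hc, hu⟩ := existsUnique_Phi_root hβcr hmem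
  have h1 := hu (F βcr) ⟨(hF βcr hmem).1, hardyEq_iff_Phi.1 (hF βcr hmem).2⟩
  have h2 := hu (1/4) ⟨⟨by norm_num, le_refl _⟩, Phi_crit_quarter hβcr⟩
  rw [h1, h2]

lemma F_strictAnti (hβcr : isBetaCr βcr)
    (hF : ∀ β ∈ Icc βcr (2*π), F β ∈ Ioc (0:ℝ) (1/4) ∧ hardyEq (F β) β) :
    StrictAntiOn F (Icc βcr (2*π)) := by
  intro β1 h1 β2 h2 h12
  have hπ := hβcr.1.1
  have hπ1 : π < β1 := lt_of_lt_of_le hπ h1.1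
  have hc2 := (hF β2 h2).1
  have hc1 := (hF β1 h1).1
  have hroot2 : Phi β2 (F β2) = 0 := hardyEq_iff_Phi.1 (hF β2 h2).2
  have hroot1 : Phi β1 (F β1) = 0 := hardyEq_iff_Phi.1 (hF β1 h1).2
  have hlt : Phi β1 (F β2) < 0 := by
    rw [← hroot2]
    exact Phi_lt_beta hc2.1 hc2.2 hπ1 h12 h2.2
  by_contra hcon
  push_neg at hcon
  have hmono := Phi_strictMonoOn hπ1 h1.2
  rcases eq_or_lt_of_le hcon with heq | hstrict
  · rw [heq] at hroot1; rw [hroot1] at hlt; exact lt_irrefl _ hlt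
  · have := hmono ⟨hc1.1.le, hc1.2⟩ ⟨hc2.1.le, hc2.2⟩ hstrict
    rw [hroot1] at this
    linarith

end FFacts

section FCont

variable {βcr : ℝ} {F : ℝ → ℝ}

lemma F_continuousOn (hβcr : isBetaCr βcr)
    (hF : ∀ β ∈ Icc βcr (2*π), F β ∈ Ioc (0:ℝ) (1/4) ∧ hardyEq (F β) β) :
    ContinuousOn F (Icc βcr (2*π)) := by
  intro β₀ hβ₀
  have hπ := hβcr.1.1
  have hπ0 : π < β₀ := lt_of_lt_of_le hπ hβ₀.1
  have hc₀ := (hF β₀ hβ₀).1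
  set c₀ := F β₀ with hc₀def
  have hroot₀ : Phi β₀ c₀ = 0 := hardyEq_iff_Phi.1 (hF β₀ hβ₀).2
  rw [ContinuousWithinAt, Metric.tendsto_nhds]
  intro ε hε
  have hmemev : ∀ᶠ β in 𝓝[Icc βcr (2*π)] β₀, β ∈ Icc βcr (2*π) :=
    eventually_mem_nhdsWithin
  -- lower bound
  have hlow : ∀ᶠ β in 𝓝[Icc βcr (2*π)] β₀, c₀ - ε < F β := by
    rcases le_or_gt (c₀ - ε) 0 with h | h
    · filter_upwards [hmemev] with β hβ
      exact lt_of_le_of_lt h (hF β hβ).1.1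
    · have hmem1 : c₀ - ε ∈ Icc (0:ℝ) (1/4) := ⟨h.le, by linarith [hc₀.2]⟩
      have hneg : Phi β₀ (c₀ - ε) < 0 := by
        have := (Phi_strictMonoOn hπ0 hβ₀.2) hmem1 ⟨hc₀.1.le, hc₀.2⟩ (by linarith)
        rwa [hroot₀] at this
      have hcont : ContinuousAt (fun β => Phi β (c₀ - ε)) β₀ :=
        Phi_continuousAt_beta hmem1.1 hmem1.2 hπ0 hβ₀.2
      have hev : ∀ᶠ β in 𝓝 β₀, Phi β (c₀ - ε) < 0 := by
        have := hcont.tendsto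
        exact this.eventually_lt_const hneg
      filter_upwards [hmemev, nhdsWithin_le_nhds hev] with β hβ hPhi
      by_contra hcon
      push_neg at hcon
      have hrootβ : Phi β (F β) = 0 := hardyEq_iff_Phi.1 (hF β hβ).2
      have hmono := (Phi_strictMonoOn (lt_of_lt_of_le hπ hβ.1) hβ.2).monotoneOn
      have := hmono ⟨(hF β hβ).1.1.le, (hF β hβ).1.2⟩ hmem1 hcon
      rw [hrootβ] at this
      linarith
  -- upper bound
  have hup : ∀ᶠ β in 𝓝[Icc βcr (2*π)] β₀, F β < c₀ + ε := by
    rcases lt_or_ge (1/4 : ℝ) (c₀ + ε) with h | h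
    · filter_upwards [hmemev] with β hβ
      exact lt_of_le_of_lt (hF β hβ).1.2 h
    · have hmem1 : c₀ + ε ∈ Icc (0:ℝ) (1/4) := ⟨by linarith [hc₀.1], h⟩
      have hpos : 0 < Phi β₀ (c₀ + ε) := by
        have := (Phi_strictMonoOn hπ0 hβ₀.2) ⟨hc₀.1.le, hc₀.2⟩ hmem1 (by linarith)
        rwa [hroot₀] at this
      have hcont : ContinuousAt (fun β => Phi β (c₀ + ε)) β₀ :=
        Phi_continuousAt_beta hmem1.1 hmem1.2 hπ0 hβ₀.2
      have hev : ∀ᶠ β in 𝓝 β₀, 0 < Phi β (c₀ + ε) :=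
        hcont.tendsto.eventually_const_lt hpos
      filter_upwards [hmemev, nhdsWithin_le_nhds hev] with β hβ hPhi
      by_contra hcon
      push_neg at hcon
      have hrootβ : Phi β (F β) = 0 := hardyEq_iff_Phi.1 (hF β hβ).2
      have hmono := (Phi_strictMonoOn (lt_of_lt_of_le hπ hβ.1) hβ.2).monotoneOn
      have := hmono hmem1 ⟨(hF β hβ).1.1.le, (hF β hβ).1.2⟩ hcon
      rw [hrootβ] at this
      linarith
  filter_upwards [hlow, hup] with β h1 h2
  rw [Real.dist_eq, abs_lt]
  constructor <;> [linarith; linarith]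

end FCont

/-! ### Smooth reparametrization: the variable `s = √(1-4c)` -/

def uu (s : ℝ) : ℝ := Real.sqrt (1 - s^2) / 2

def Psi (p : ℝ × ℝ) : ℝ :=
  uu p.2 * Real.tan (uu p.2 * ((p.1 - π) / 2)) - 2 * (Gr p.2) ^ 2

lemma sqrt_four_mul (c : ℝ) (hc : 0 ≤ c) : Real.sqrt (4 * c) = 2 * Real.sqrt c := by
  rw [show (4:ℝ) = 2^2 by norm_num, Real.sqrt_mul (by positivity), Real.sqrt_sq (by norm_num : (0:ℝ) ≤ 2)]

lemma uu_sqrt {c : ℝ} (hc : 0 ≤ c) (hc4 : c ≤ 1/4) :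
    uu (Real.sqrt (1 - 4*c)) = Real.sqrt c := by
  unfold uu
  rw [Real.sq_sqrt (by linarith : (0:ℝ) ≤ 1 - 4*c)]
  rw [show 1 - (1 - 4*c) = 4*c by ring, sqrt_four_mul c hc]
  ring

lemma Psi_eq_Phi {β c : ℝ} (hc : 0 ≤ c) (hc4 : c ≤ 1/4) :
    Psi (β, Real.sqrt (1 - 4*c)) = Phi β c := by
  unfold Psi Phi
  rw [uu_sqrt hc hc4]

lemma uu_pos {s : ℝ} (hs1 : -1 < s) (hs2 : s < 1) : 0 < uu s := by
  unfold uu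
  have : 0 < 1 - s^2 := by nlinarith
  positivity

lemma uu_le_half {s : ℝ} : uu s ≤ 1/2 := by
  unfold uu
  have h : Real.sqrt (1 - s^2) ≤ 1 := by
    rcases le_or_gt (1 - s^2) 0 with h | h
    · rw [Real.sqrt_eq_zero_of_nonpos h]; norm_num
    · have := Real.sqrt_le_sqrt (show 1 - s^2 ≤ 1 by nlinarith)
      rwa [Real.sqrt_one] at this
  linarith

lemma contDiffAt_uu {s : ℝ} (hs1 : -1 < s) (hs2 : s < 1) : ContDiffAt ℝ (⊤ : ℕ∞) uu s := by
  have h : (0:ℝ) < 1 - s^2 := by nlinarith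
  have h1 : ContDiffAt ℝ (⊤ : ℕ∞) (fun s : ℝ => Real.sqrt (1 - s^2)) s :=
    (Real.contDiffAt_sqrt h.ne').comp s
      ((contDiff_const.sub (contDiff_id.pow 2)).contDiffAt)
  exact h1.div_const 2

lemma hasDerivAt_uu {s : ℝ} (hs1 : -1 < s) (hs2 : s < 1) :
    HasDerivAt uu (-s / (2 * Real.sqrt (1 - s^2))) s := by
  have h : (0:ℝ) < 1 - s^2 := by nlinarith
  have hinner : HasDerivAt (fun s : ℝ => 1 - s^2) (-(2*s)) s := by
    have := (hasDerivAt_pow 2 s).const_sub 1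
    simpa using this
  have hsq := (Real.hasDerivAt_sqrt h.ne').comp s hinner
  have := hsq.div_const 2
  refine this.congr_deriv ?_
  field_simp

lemma hasDerivAt_Gr {s : ℝ} (hs : -1 < s) :
    HasDerivAt Gr
      ((deriv Real.Gamma ((3+s)/4) * (1/4) * Real.Gamma ((1+s)/4) -
        Real.Gamma ((3+s)/4) * (deriv Real.Gamma ((1+s)/4) * (1/4))) /
        (Real.Gamma ((1+s)/4))^2) s := by
  have hn : (0:ℝ) < (3+s)/4 := by linarith
  have hd : (0:ℝ) < (1+s)/4 := by linarith
  have haff3 : HasDerivAt (fun x : ℝ => (3 + x)/4) (1/4) s := by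
    have := ((hasDerivAt_id s).const_add 3).div_const 4
    simpa using this
  have haff1 : HasDerivAt (fun x : ℝ => (1 + x)/4) (1/4) s := by
    have := ((hasDerivAt_id s).const_add 1).div_const 4
    simpa using this
  have hN : HasDerivAt (fun x : ℝ => Real.Gamma ((3+x)/4)) (deriv Real.Gamma ((3+s)/4) * (1/4)) s :=
    HasDerivAt.comp (h₂ := Real.Gamma) s ((Real.differentiableAt_Gamma (Gamma_ne_neg_nat hn)).hasDerivAt) haff3
  have hD : HasDerivAt (fun x : ℝ => Real.Gamma ((1+x)/4)) (deriv Real.Gamma ((1+s)/4) * (1/4)) s :=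
    HasDerivAt.comp (h₂ := Real.Gamma) s ((Real.differentiableAt_Gamma (Gamma_ne_neg_nat hd)).hasDerivAt) haff1
  exact hN.div hD (Real.Gamma_pos_of_pos hd).ne'

/-- Cross-multiplied monotonicity of the logarithmic derivative of `Γ`. -/
lemma gamma_cross {x y : ℝ} (hx : 0 < x) (hxy : x < y) :
    deriv Real.Gamma x * Real.Gamma y ≤ deriv Real.Gamma y * Real.Gamma x := by
  have hy : 0 < y := hx.trans hxy
  have h1 : deriv lg x = deriv Real.Gamma x / Real.Gamma x := (hasDerivAt_lg hx).deriv
  have h2 : deriv lg y = deriv Real.Gamma y / Real.Gamma y := (hasDerivAt_lg hy).deriv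
  have h := deriv_lg_mono hx hxy
  rw [h1, h2, div_le_div_iff₀ (Real.Gamma_pos_of_pos hx) (Real.Gamma_pos_of_pos hy)] at h
  linarith

lemma gamma_cross_quarter :
    deriv Real.Gamma (1/4) * Real.Gamma (3/4) < deriv Real.Gamma (3/4) * Real.Gamma (1/4) := by
  have h1 : deriv lg (1/4) = deriv Real.Gamma (1/4) / Real.Gamma (1/4) :=
    (hasDerivAt_lg (by norm_num)).deriv
  have h2 : deriv lg (3/4) = deriv Real.Gamma (3/4) / Real.Gamma (3/4) :=
    (hasDerivAt_lg (by norm_num)).deriv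
  have h := deriv_lg_quarter_lt
  rw [h1, h2, div_lt_div_iff₀ (Real.Gamma_pos_of_pos (by norm_num))
    (Real.Gamma_pos_of_pos (by norm_num))] at h
  linarith

/-- The derivative of `Gr` is nonnegative on `[0,1)`, and positive at `0`. -/
lemma deriv_Gr_nonneg {s : ℝ} (hs : 0 ≤ s) :
    0 ≤ (deriv Real.Gamma ((3+s)/4) * (1/4) * Real.Gamma ((1+s)/4) -
        Real.Gamma ((3+s)/4) * (deriv Real.Gamma ((1+s)/4) * (1/4))) /
        (Real.Gamma ((1+s)/4))^2 := by
  have hd : (0:ℝ) < (1+s)/4 := by linarith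
  have hcross := gamma_cross hd (show (1+s)/4 < (3+s)/4 by linarith)
  have hpos := Real.Gamma_pos_of_pos hd
  apply div_nonneg _ (by positivity)
  nlinarith

lemma deriv_Gr_pos_zero :
    0 < (deriv Real.Gamma ((3+(0:ℝ))/4) * (1/4) * Real.Gamma ((1+(0:ℝ))/4) -
        Real.Gamma ((3+(0:ℝ))/4) * (deriv Real.Gamma ((1+(0:ℝ))/4) * (1/4))) /
        (Real.Gamma ((1+(0:ℝ))/4))^2 := by
  have hcross := gamma_cross_quarter
  have hpos : (0:ℝ) < Real.Gamma (1/4) := Real.Gamma_pos_of_pos (by norm_num)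
  norm_num
  apply div_pos _ (by positivity)
  nlinarith

lemma contDiffAt_Psi {β₀ s₀ : ℝ} (hs1 : -1 < s₀) (hs2 : s₀ < 1)
    (hcos : Real.cos (uu s₀ * ((β₀ - π)/2)) ≠ 0) : ContDiffAt ℝ (⊤ : ℕ∞) Psi (β₀, s₀) := by
  have hu2 : ContDiffAt ℝ (⊤ : ℕ∞) (fun p : ℝ×ℝ => uu p.2) (β₀, s₀) :=
    ContDiffAt.comp (g := uu) _ (contDiffAt_uu hs1 hs2) contDiff_snd.contDiffAt
  have hinner : ContDiffAt ℝ (⊤ : ℕ∞) (fun p : ℝ×ℝ => uu p.2 * ((p.1 - π)/2)) (β₀, s₀) :=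
    hu2.mul ((contDiff_fst.contDiffAt.sub contDiffAt_const).div_const 2)
  have htan : ContDiffAt ℝ (⊤ : ℕ∞) (fun p : ℝ×ℝ => Real.tan (uu p.2 * ((p.1 - π)/2))) (β₀, s₀) :=
    ContDiffAt.comp (g := Real.tan) _ (Real.contDiffAt_tan.2 hcos) hinner
  have hGr2 : ContDiffAt ℝ (⊤ : ℕ∞) (fun p : ℝ×ℝ => Gr p.2) (β₀, s₀) :=
    ContDiffAt.comp (g := Gr) _ (contDiffAt_Gr hs1) contDiff_snd.contDiffAt
  exact (hu2.mul htan).sub (contDiffAt_const.mul (hGr2.pow 2))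

lemma psi_section_hasDerivAt {β₀ s₀ : ℝ} (hs1 : -1 < s₀) (hs2 : s₀ < 1)
    (hcos : Real.cos (uu s₀ * ((β₀ - π)/2)) ≠ 0) :
    HasDerivAt (fun s => Psi (β₀, s))
      ((-s₀ / (2 * Real.sqrt (1 - s₀^2))) * Real.tan (uu s₀ * ((β₀ - π)/2))
        + uu s₀ * (1 / Real.cos (uu s₀ * ((β₀ - π)/2)) ^ 2 *
            ((-s₀ / (2 * Real.sqrt (1 - s₀^2))) * ((β₀ - π)/2)))
        - 2 * (2 * Gr s₀ *
          ((deriv Real.Gamma ((3+s₀)/4) * (1/4) * Real.Gamma ((1+s₀)/4) -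
            Real.Gamma ((3+s₀)/4) * (deriv Real.Gamma ((1+s₀)/4) * (1/4))) /
            (Real.Gamma ((1+s₀)/4))^2))) s₀ := by
  have hu := hasDerivAt_uu hs1 hs2
  have hmul := hu.mul_const ((β₀ - π)/2)
  have htan := (Real.hasDerivAt_tan hcos).comp s₀ hmul
  have hprod := hu.mul htan
  have hGr := hasDerivAt_Gr hs1
  have hGrsq := (hGr.pow 2).const_mul (2:ℝ)
  have := hprod.sub hGrsq
  refine this.congr_deriv ?_
  simp only [Function.comp_apply]
  push_cast
  ring

lemma qval_neg {β₀ s₀ : ℝ} (hs0 : 0 ≤ s₀) (hs2 : s₀ < 1)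
    (hβ1 : π < β₀) (hβ2 : β₀ ≤ 2*π) :
    ((-s₀ / (2 * Real.sqrt (1 - s₀^2))) * Real.tan (uu s₀ * ((β₀ - π)/2))
        + uu s₀ * (1 / Real.cos (uu s₀ * ((β₀ - π)/2)) ^ 2 *
            ((-s₀ / (2 * Real.sqrt (1 - s₀^2))) * ((β₀ - π)/2)))
        - 2 * (2 * Gr s₀ *
          ((deriv Real.Gamma ((3+s₀)/4) * (1/4) * Real.Gamma ((1+s₀)/4) -
            Real.Gamma ((3+s₀)/4) * (deriv Real.Gamma ((1+s₀)/4) * (1/4))) /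
            (Real.Gamma ((1+s₀)/4))^2))) < 0 := by
  have hs1 : (-1:ℝ) < s₀ := by linarith
  have hupos : 0 < uu s₀ := uu_pos hs1 hs2
  have ht0 : 0 < (β₀ - π)/2 := by linarith
  have ht2 : (β₀ - π)/2 ≤ π/2 := by linarith
  set θ := uu s₀ * ((β₀ - π)/2) with hθ
  have hθpos : 0 < θ := mul_pos hupos ht0
  have hθlt : θ < π/2 := by
    have h1 : θ ≤ (1/2) * (π/2) := mul_le_mul uu_le_half ht2 ht0.le (by norm_num)
    have := Real.pi_pos
    linarith
  have htanpos : 0 < Real.tan θ := Real.tan_pos_of_pos_of_lt_pi_div_two hθpos hθlt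
  have hcospos : 0 < Real.cos θ := Real.cos_pos_of_mem_Ioo ⟨by linarith, hθlt⟩
  have hsqrtpos : 0 < Real.sqrt (1 - s₀^2) := Real.sqrt_pos.2 (by nlinarith)
  have hGrpos : 0 < Gr s₀ := Gr_pos hs1
  set gr' := (deriv Real.Gamma ((3+s₀)/4) * (1/4) * Real.Gamma ((1+s₀)/4) -
            Real.Gamma ((3+s₀)/4) * (deriv Real.Gamma ((1+s₀)/4) * (1/4))) /
            (Real.Gamma ((1+s₀)/4))^2 with hgr'
  have hgrnn : 0 ≤ gr' := deriv_Gr_nonneg hs0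
  rcases eq_or_lt_of_le hs0 with hzero | hpos
  · -- s₀ = 0 : the Gamma term is strictly negative
    have hu' : -s₀ / (2 * Real.sqrt (1 - s₀^2)) = 0 := by rw [← hzero]; simp
    rw [hu']
    have hgr'pos : 0 < gr' := by
      rw [hgr', ← hzero]
      exact deriv_Gr_pos_zero
    simp only [zero_mul, mul_zero, zero_add, add_zero]
    nlinarith
  · -- s₀ > 0 : the first term is strictly negative
    have hu'neg : -s₀ / (2 * Real.sqrt (1 - s₀^2)) < 0 := by
      apply div_neg_of_neg_of_pos (by linarith) (by positivity)
    have h1 : (-s₀ / (2 * Real.sqrt (1 - s₀^2))) * Real.tan θ < 0 :=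
      mul_neg_of_neg_of_pos hu'neg htanpos
    have h2 : uu s₀ * (1 / Real.cos θ ^ 2 * ((-s₀ / (2 * Real.sqrt (1 - s₀^2))) * ((β₀ - π)/2))) ≤ 0 := by
      apply mul_nonpos_of_nonneg_of_nonpos hupos.le
      apply mul_nonpos_of_nonneg_of_nonpos (by positivity)
      exact mul_nonpos_of_nonpos_of_nonneg hu'neg.le ht0.le
    nlinarith

/-- The block-triangular continuous linear equivalence `(x, y) ↦ (x, p₁ x + q y)`. -/
def mkEquiv (p₁ q : ℝ) (hq : q ≠ 0) : (ℝ × ℝ) ≃L[ℝ] (ℝ × ℝ) :=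
  LinearEquiv.toContinuousLinearEquiv
  { toFun := fun x => (x.1, p₁ * x.1 + q * x.2)
    map_add' := fun x y => by
      simp only [Prod.fst_add, Prod.snd_add, Prod.mk_add_mk]
      exact Prod.ext rfl (by ring)
    map_smul' := fun r x => by
      simp only [Prod.smul_fst, Prod.smul_snd, Prod.smul_mk, smul_eq_mul, RingHom.id_apply]
      exact Prod.ext rfl (by ring)
    invFun := fun y => (y.1, (y.2 - p₁ * y.1) / q)
    left_inv := fun x => by
      simp only []
      ext
      · rfl
      · show (p₁ * x.1 + q * x.2 - p₁ * x.1) / q = x.2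
        field_simp
        ring
    right_inv := fun y => by
      simp only []
      ext
      · rfl
      · show p₁ * y.1 + q * ((y.2 - p₁ * y.1) / q) = y.2
        field_simp
        ring }

lemma mkEquiv_apply (p₁ q : ℝ) (hq : q ≠ 0) (x : ℝ × ℝ) :
    mkEquiv p₁ q hq x = (x.1, p₁ * x.1 + q * x.2) := rfl

section Smooth

variable {βcr : ℝ} {F : ℝ → ℝ}

lemma contDiffWithinAt_F (hβcr : isBetaCr βcr)
    (hF : ∀ β ∈ Icc βcr (2*π), F β ∈ Ioc (0:ℝ) (1/4) ∧ hardyEq (F β) β)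
    {β₀ : ℝ} (hβ₀ : β₀ ∈ Icc βcr (2*π)) :
    ContDiffWithinAt ℝ (⊤ : ℕ∞) F (Icc βcr (2*π)) β₀ := by
  have hπ := hβcr.1.1
  have hπ0 : π < β₀ := lt_of_lt_of_le hπ hβ₀.1
  have hc₀ := (hF β₀ hβ₀).1
  have hroot₀ : Phi β₀ (F β₀) = 0 := hardyEq_iff_Phi.1 (hF β₀ hβ₀).2
  set s₀ := Real.sqrt (1 - 4 * F β₀) with hs₀def
  have hs₀0 : 0 ≤ s₀ := Real.sqrt_nonneg _
  have hs₀sq : s₀^2 = 1 - 4 * F β₀ := Real.sq_sqrt (by linarith [hc₀.2])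
  have hs₀1 : s₀ < 1 := by nlinarith [hc₀.1]
  have hs₀m1 : (-1:ℝ) < s₀ := by linarith
  have ht0 : 0 < (β₀ - π)/2 := by linarith
  have ht2 : (β₀ - π)/2 ≤ π/2 := by linarith [hβ₀.2]
  have hu₀ : uu s₀ = Real.sqrt (F β₀) := uu_sqrt hc₀.1.le hc₀.2
  have hcos : Real.cos (uu s₀ * ((β₀ - π)/2)) ≠ 0 := by
    rw [hu₀]
    exact cos_arg_pos hc₀.1.le hc₀.2 ht0.le ht2
  have hΨ : ContDiffAt ℝ (⊤ : ℕ∞) Psi (β₀, s₀) := contDiffAt_Psi hs₀m1 hs₀1 hcos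
  have hdiff : HasFDerivAt Psi (fderiv ℝ Psi (β₀, s₀)) (β₀, s₀) :=
    (hΨ.differentiableAt (by simp)).hasFDerivAt
  set L := fderiv ℝ Psi (β₀, s₀) with hLdef
  have hcurve : HasDerivAt (fun s : ℝ => ((β₀ : ℝ), s)) (((0:ℝ), (1:ℝ))) s₀ :=
    (hasDerivAt_const s₀ β₀).prodMk (hasDerivAt_id s₀)
  have hsect : HasDerivAt (fun s => Psi (β₀, s)) (L ((0:ℝ), (1:ℝ))) s₀ :=
    hdiff.comp_hasDerivAt s₀ hcurve
  have hqeq : L ((0:ℝ), (1:ℝ)) =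
      ((-s₀ / (2 * Real.sqrt (1 - s₀^2))) * Real.tan (uu s₀ * ((β₀ - π)/2))
        + uu s₀ * (1 / Real.cos (uu s₀ * ((β₀ - π)/2)) ^ 2 *
            ((-s₀ / (2 * Real.sqrt (1 - s₀^2))) * ((β₀ - π)/2)))
        - 2 * (2 * Gr s₀ *
          ((deriv Real.Gamma ((3+s₀)/4) * (1/4) * Real.Gamma ((1+s₀)/4) -
            Real.Gamma ((3+s₀)/4) * (deriv Real.Gamma ((1+s₀)/4) * (1/4))) /
            (Real.Gamma ((1+s₀)/4))^2))) :=
    hsect.unique (psi_section_hasDerivAt hs₀m1 hs₀1 hcos)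
  have hqneg : L ((0:ℝ), (1:ℝ)) < 0 := by
    rw [hqeq]; exact qval_neg hs₀0 hs₀1 hπ0 hβ₀.2
  set e := mkEquiv (L ((1:ℝ),(0:ℝ))) (L ((0:ℝ),(1:ℝ))) hqneg.ne with hedef
  have hLlin : ∀ x : ℝ × ℝ, L x = L ((1:ℝ),(0:ℝ)) * x.1 + L ((0:ℝ),(1:ℝ)) * x.2 := by
    intro x
    have hx : x = x.1 • (((1:ℝ),(0:ℝ)) : ℝ × ℝ) + x.2 • (((0:ℝ),(1:ℝ)) : ℝ × ℝ) := by
      ext <;> simp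
    conv_lhs => rw [hx]
    rw [map_add, map_smul, map_smul, smul_eq_mul, smul_eq_mul]
    ring
  have hecoe : (e : (ℝ × ℝ) →L[ℝ] (ℝ × ℝ)) =
      (ContinuousLinearMap.fst ℝ ℝ ℝ).prod L := by
    apply ContinuousLinearMap.ext
    intro x
    have h1 : (e : (ℝ × ℝ) →L[ℝ] (ℝ × ℝ)) x = (x.1, L ((1:ℝ),(0:ℝ)) * x.1 + L ((0:ℝ),(1:ℝ)) * x.2) := rfl
    rw [h1, ContinuousLinearMap.prod_apply, ← hLlin x]
    rfl
  set Hm : ℝ × ℝ → ℝ × ℝ := fun p => (p.1, Psi p) with hHmdef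
  have hHs : ContDiffAt ℝ (⊤ : ℕ∞) Hm (β₀, s₀) := contDiff_fst.contDiffAt.prodMk hΨ
  have hH' : HasFDerivAt Hm (e : (ℝ × ℝ) →L[ℝ] (ℝ × ℝ)) (β₀, s₀) := by
    rw [hecoe]
    exact (hasFDerivAt_fst).prodMk hdiff
  have hst : HasStrictFDerivAt Hm (e : (ℝ × ℝ) →L[ℝ] (ℝ × ℝ)) (β₀, s₀) :=
    hHs.hasStrictFDerivAt' hH' (by simp)
  set W := hst.localInverse Hm e (β₀, s₀) with hWdef
  have hWsm0 : ContDiffAt ℝ (⊤ : ℕ∞) (hHs.localInverse hH' (by simp)) (Hm (β₀, s₀)) :=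
    hHs.to_localInverse hH' (by simp)
  have hWW : hHs.localInverse hH' (by simp) = W := rfl
  have hPsi₀ : Psi (β₀, s₀) = 0 := by
    rw [hs₀def, Psi_eq_Phi hc₀.1.le hc₀.2, hroot₀]
  have hHm₀ : Hm (β₀, s₀) = (β₀, 0) := by
    rw [hHmdef]; simp only [hPsi₀]
  have hWsm : ContDiffAt ℝ (⊤ : ℕ∞) W ((β₀ : ℝ), (0:ℝ)) := by
    rw [← hHm₀]; rw [hWW] at hWsm0; exact hWsm0
  have hcurve2 : ContDiffAt ℝ (⊤ : ℕ∞) (fun β : ℝ => ((β : ℝ), (0:ℝ))) β₀ :=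
    contDiffAt_id.prodMk contDiffAt_const
  have hgsm : ContDiffAt ℝ (⊤ : ℕ∞) (fun β : ℝ => (W (β, 0)).2) β₀ :=
    contDiff_snd.contDiffAt.comp _ (hWsm.comp β₀ hcurve2)
  have hFt : ContDiffAt ℝ (⊤ : ℕ∞) (fun β : ℝ => (1 - (W (β, 0)).2 ^ 2)/4) β₀ :=
    (contDiffAt_const.sub (hgsm.pow 2)).div_const 4
  -- identification of F with the smooth candidate on a neighborhood within the set
  have hFcont : ContinuousWithinAt F (Icc βcr (2*π)) β₀ := (F_continuousOn hβcr hF) β₀ hβ₀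
  have hσcont : ContinuousWithinAt (fun β => ((β : ℝ), Real.sqrt (1 - 4 * F β)))
      (Icc βcr (2*π)) β₀ := by
    apply ContinuousWithinAt.prodMk continuousWithinAt_id
    exact Real.continuous_sqrt.continuousAt.comp_continuousWithinAt
      (continuousWithinAt_const.sub (continuousWithinAt_const.mul hFcont))
  have hleft : ∀ᶠ x in 𝓝 ((β₀ : ℝ), s₀), W (Hm x) = x := hst.eventually_left_inverse
  have hev : ∀ᶠ β in 𝓝[Icc βcr (2*π)] β₀,
      W (Hm (β, Real.sqrt (1 - 4 * F β))) = (β, Real.sqrt (1 - 4 * F β)) := by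
    have htend : Filter.Tendsto (fun β => ((β : ℝ), Real.sqrt (1 - 4 * F β)))
        (𝓝[Icc βcr (2*π)] β₀) (𝓝 ((β₀ : ℝ), s₀)) := hσcont
    exact htend.eventually hleft
  have hEq : ∀ᶠ β in 𝓝[Icc βcr (2*π)] β₀, F β = (1 - (W (β, 0)).2 ^ 2)/4 := by
    filter_upwards [hev, eventually_mem_nhdsWithin] with β h1 h2
    have hFβ := (hF β h2).1
    have hrootβ : Phi β (F β) = 0 := hardyEq_iff_Phi.1 (hF β h2).2
    have hHmβ : Hm (β, Real.sqrt (1 - 4 * F β)) = (β, 0) := by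
      rw [hHmdef]
      simp only [Psi_eq_Phi hFβ.1.le hFβ.2, hrootβ]
    rw [hHmβ] at h1
    have h3 : (W (β, 0)).2 = Real.sqrt (1 - 4 * F β) := by rw [h1]
    rw [h3, Real.sq_sqrt (by linarith [hFβ.2] : (0:ℝ) ≤ 1 - 4 * F β)]
    ring
  have hx0 : F β₀ = (1 - (W (β₀, 0)).2 ^ 2)/4 := by
    have hW0 : W (β₀, 0) = (β₀, s₀) := by
      rw [← hHm₀]
      exact hst.localInverse_apply_image
    rw [hW0]
    show F β₀ = (1 - s₀ ^ 2)/4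
    rw [hs₀sq]
    ring
  exact (hFt.contDiffWithinAt).congr_of_eventuallyEq hEq hx0

end Smooth

end


/-- For every `β ∈ [βcr, 2π]` there is a unique `c = c_β ∈ (0, 1/4]` solving the
Hardy-constant equation for `β`; the function `β ↦ c_β` is `C^∞` and strictly decreasing
on `[βcr, 2π]`, `c_{βcr} = 1/4`, and `c_{2π} < c_β < 1/4` for `βcr < β < 2π`. -/
theorem hardy_constant_equation_unique_solution
    (βcr : ℝ) (hβcr : isBetaCr βcr) :
    (∀ β ∈ Set.Icc βcr (2 * Real.pi),
      ∃! c : ℝ, c ∈ Set.Ioc (0 : ℝ) (1 / 4) ∧ hardyEq c β) ∧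
    ∀ F : ℝ → ℝ,
      (∀ β ∈ Set.Icc βcr (2 * Real.pi),
        F β ∈ Set.Ioc (0 : ℝ) (1 / 4) ∧ hardyEq (F β) β) →
      ContDiffOn ℝ (⊤ : ℕ∞) F (Set.Icc βcr (2 * Real.pi)) ∧
      StrictAntiOn F (Set.Icc βcr (2 * Real.pi)) ∧
      F βcr = 1 / 4 ∧
      ∀ β : ℝ, βcr < β → β < 2 * Real.pi →
        F (2 * Real.pi) < F β ∧ F β < 1 / 4 := by
  constructor
  · intro β hβ
    exact existsUnique_hardy hβcr hβ
  · intro F hF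
    have hanti := F_strictAnti hβcr hF
    have hcrit := F_crit hβcr hF
    refine ⟨fun β₀ hβ₀ => contDiffWithinAt_F hβcr hF hβ₀, hanti, hcrit, ?_⟩
    intro β h1 h2
    have hβK : β ∈ Set.Icc βcr (2 * Real.pi) := ⟨h1.le, h2.le⟩
    have h2K : (2 * Real.pi) ∈ Set.Icc βcr (2 * Real.pi) := ⟨hβcr.1.2.le, le_refl _⟩
    have hcrK : βcr ∈ Set.Icc βcr (2 * Real.pi) := ⟨le_refl _, hβcr.1.2.le⟩
    constructor
    · exact hanti hβK h2K h2
    · rw [← hcrit]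
      exact hanti hcrK hβK h1
end

section
/- The unique c ∈ (0, 1/4] solving the Hardy-constant equation for β = 2π, i.e. satisfying √c·tan(√c·π/2) = 2·(Γ((3+√(1−4c))/4)/Γ((1+√(1−4c))/4))², lies in the interval (0.2053, 0.2054). -/
/-!
Write the equation as `T c = G c` with `T c = √c · tan (√c π / 2)` and
`G c = 2 R(x)²`, where `R x = Γ(x + 1/2) / Γ x` and `x = (1 + √(1 - 4c)) / 4`. By log-convexity
of `Γ`, `R` is increasing, so `G` is decreasing while `T` is strictly increasing on `(0, 1/4]`:
there is at most one root, and by the intermediate value theorem it lies in `(0.2053, 0.2054)`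
as soon as `T < G` at `0.2053` and `T > G` at `0.2054`.

For these two numerical checks, `tan` is enclosed by the degree-8 Taylor polynomials of `sin`
and `cos`, and `R x = ∏_{j < n} (x + j) / (x + j + 1/2) · R (x + n)` with `n = 20`, together
with `y - 1/4 ≤ R(y)² ≤ y - 1/4 + 1/(16y)`. These last bounds hold because the functional
equation `R (y + 1) = (y + 1/2) / y · R y` makes `R(y)² / φ(y)` monotone along `y + ℕ` for both
choices of `φ`, while `R(y)² / y → 1` by `R y · R (y + 1/2) = y`.
-/

open Real Set

lemma le_of_forall_le_add_one_div {a b : ℝ} (h : ∀ n : ℕ, a ≤ b + 1 / (n + 1)) : a ≤ b :=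
  le_of_forall_pos_le_add fun _ hε ↦
    let ⟨n, hn⟩ := exists_nat_one_div_lt hε
    (h n).trans (by linarith)

noncomputable def gammaHalfRatio (x : ℝ) : ℝ := Gamma (x + 1 / 2) / Gamma x

section gammaHalfRatio

variable {x y : ℝ}

lemma gammaHalfRatio_pos (hx : 0 < x) : 0 < gammaHalfRatio x :=
  div_pos (Gamma_pos_of_pos (by linarith)) (Gamma_pos_of_pos hx)

lemma gammaHalfRatio_add_one (hx : 0 < x) :
    gammaHalfRatio (x + 1) = (x + 1 / 2) / x * gammaHalfRatio x := by
  have := (Gamma_pos_of_pos hx).ne'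
  rw [gammaHalfRatio, gammaHalfRatio, add_right_comm, Gamma_add_one (by positivity),
    Gamma_add_one hx.ne']
  field_simp

lemma gammaHalfRatio_mul_add_half (hx : 0 < x) :
    gammaHalfRatio x * gammaHalfRatio (x + 1 / 2) = x := by
  have := (Gamma_pos_of_pos (show 0 < x + 1 / 2 by linarith)).ne'
  rw [gammaHalfRatio, gammaHalfRatio, add_assoc, add_halves, Gamma_add_one hx.ne']
  field_simp

lemma gammaHalfRatio_monotoneOn : MonotoneOn gammaHalfRatio (Ioi 0) := by
  intro x (hx : 0 < x) y (hy : 0 < y) hxy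
  have hx' : 0 < x + 1 / 2 := by linarith
  have hy' : 0 < y + 1 / 2 := by linarith
  have h₁ := convexOn_log_Gamma.secant_mono (a := x) hx hx' hy' (by linarith) (by linarith)
    (by linarith)
  have h₂ := convexOn_log_Gamma.secant_mono (a := y + 1 / 2) hy' hx hy (by linarith)
    (by linarith) hxy
  simp only [Function.comp_apply, add_sub_cancel_left, sub_add_cancel_left] at h₁ h₂
  rw [← neg_sub (y + 1 / 2) x, div_neg, ← neg_div, neg_sub] at h₂
  have key : log (Gamma (x + 1 / 2) / Gamma x) ≤ log (Gamma (y + 1 / 2) / Gamma y) := by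
    rw [log_div (Gamma_pos_of_pos hx').ne' (Gamma_pos_of_pos hx).ne',
      log_div (Gamma_pos_of_pos hy').ne' (Gamma_pos_of_pos hy).ne']
    linarith
  exact (log_le_log_iff (gammaHalfRatio_pos hx) (gammaHalfRatio_pos hy)).1 key

lemma sq_gammaHalfRatio_le_self (hy : 0 < y) : gammaHalfRatio y ^ 2 ≤ y := by
  have hmono := gammaHalfRatio_monotoneOn hy (show 0 < y + 1 / 2 by positivity) (by linarith)
  have := gammaHalfRatio_pos hy
  nlinarith [gammaHalfRatio_mul_add_half hy]

lemma sub_half_le_sq_gammaHalfRatio (hy : 0 < y) : y - 1 / 2 ≤ gammaHalfRatio y ^ 2 := by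
  have hmono := gammaHalfRatio_monotoneOn (show 0 < y + 1 / 2 by positivity)
    (show 0 < y + 1 by positivity) (by linarith)
  rw [gammaHalfRatio_add_one hy] at hmono
  have h : y ≤ (y + 1 / 2) / y * gammaHalfRatio y ^ 2 := calc
    y = gammaHalfRatio y * gammaHalfRatio (y + 1 / 2) := (gammaHalfRatio_mul_add_half hy).symm
    _ ≤ gammaHalfRatio y * ((y + 1 / 2) / y * gammaHalfRatio y) := by
      gcongr; exact (gammaHalfRatio_pos hy).le
    _ = (y + 1 / 2) / y * gammaHalfRatio y ^ 2 := by ring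
  rw [div_mul_eq_mul_div, le_div_iff₀ hy] at h
  nlinarith

lemma sub_quarter_le_sq_gammaHalfRatio (hy : 0 < y) : y - 1 / 4 ≤ gammaHalfRatio y ^ 2 := by
  rcases le_or_gt y (1 / 4) with hy' | hy'
  · nlinarith
  set q : ℝ → ℝ := fun z ↦ gammaHalfRatio z ^ 2 / (z - 1 / 4)
  have step : ∀ z > 1 / 4, q (z + 1) ≤ q z := by
    intro z hz
    simp only [q, gammaHalfRatio_add_one (by linarith : 0 < z)]
    rw [div_le_div_iff₀ (by linarith) (by linarith)]
    have := sq_nonneg (gammaHalfRatio z)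
    field_simp
    nlinarith
  have hanti : Antitone fun n : ℕ ↦ q (y + n) := antitone_nat_of_succ_le fun n ↦ by
    push_cast; rw [← add_assoc]; exact step _ (by linarith [(n.cast_nonneg : (0 : ℝ) ≤ n)])
  suffices 1 ≤ q y by
    rwa [le_div_iff₀ (by linarith), one_mul] at this
  refine le_of_forall_le_add_one_div fun n ↦ ?_
  set z := y + (n + 1 : ℕ)
  have hz : n + 1 < z := by simp only [z]; push_cast; linarith
  calc 1 ≤ (z - 1 / 2) / (z - 1 / 4) + 1 / (n + 1) := by
        rw [div_add_div _ _ (by linarith) (by positivity), le_div_iff₀ (by nlinarith)]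
        nlinarith
    _ ≤ q z + 1 / (n + 1) := by
        gcongr
        exact div_le_div_of_nonneg_right (sub_half_le_sq_gammaHalfRatio (by linarith))
          (by linarith)
    _ ≤ q y + 1 / (n + 1) := by
        have := hanti (Nat.zero_le (n + 1))
        simp only [Nat.cast_zero, add_zero] at this
        gcongr

lemma sq_gammaHalfRatio_le (hy : 0 < y) : gammaHalfRatio y ^ 2 ≤ y - 1 / 4 + 1 / (16 * y) := by
  set φ : ℝ → ℝ := fun z ↦ z - 1 / 4 + 1 / (16 * z)
  have hφ : ∀ z > 0, z - 1 / 4 < φ z := fun z hz ↦ lt_add_of_pos_right _ (by positivity)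
  have hφpos : ∀ z > 0, 0 < φ z := by
    intro z hz
    simp only [φ]
    field_simp
    nlinarith [sq_nonneg (4 * z - 1 / 2)]
  set q : ℝ → ℝ := fun z ↦ gammaHalfRatio z ^ 2 / φ z
  have step : ∀ z > 0, q z ≤ q (z + 1) := by
    intro z hz
    simp only [q, gammaHalfRatio_add_one hz]
    rw [div_le_div_iff₀ (hφpos z hz) (hφpos _ (by linarith))]
    have := sq_nonneg (gammaHalfRatio z)
    simp only [φ]
    field_simp
    -- the two sides differ by `gammaHalfRatio z ^ 2 * (16 * z ^ 2 + 4 * z + 4)`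
    nlinarith [mul_nonneg this (by positivity : (0 : ℝ) ≤ 16 * z ^ 2 + 4 * z + 4)]
  have hmono : Monotone fun n : ℕ ↦ q (y + n) := monotone_nat_of_le_succ fun n ↦ by
    push_cast; rw [← add_assoc]; exact step _ (by positivity)
  suffices q y ≤ 1 by
    rwa [div_le_iff₀ (hφpos y hy), one_mul] at this
  refine le_of_forall_le_add_one_div fun n ↦ ?_
  set z := y + (n + 1 : ℕ)
  have hz : n + 1 < z := by simp only [z]; push_cast; linarith
  have := hmono (Nat.zero_le (n + 1))
  simp only [Nat.cast_zero, add_zero] at this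
  calc q y ≤ q z := this
    _ ≤ z / φ z := div_le_div_of_nonneg_right (sq_gammaHalfRatio_le_self (by linarith))
        (hφpos z (by linarith)).le
    _ ≤ 1 + 1 / (n + 1) := by
        rw [div_le_iff₀ (hφpos z (by linarith))]
        calc z ≤ (1 + 1 / (n + 1)) * (z - 1 / 4) := by
              field_simp
              nlinarith
          _ ≤ (1 + 1 / (n + 1)) * φ z := by gcongr; exact (hφ z (by linarith)).le

lemma gammaHalfRatio_eq_prod_mul (hx : 0 < x) (n : ℕ) :
    gammaHalfRatio x =
      (∏ j ∈ Finset.range n, (x + j) / (x + j + 1 / 2)) * gammaHalfRatio (x + n) := by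
  induction n with
  | zero => simp
  | succ n ih =>
    have hxn : 0 < x + n := by positivity
    rw [ih, Finset.prod_range_succ, Nat.cast_succ, ← add_assoc, gammaHalfRatio_add_one hxn,
      mul_assoc, ← mul_assoc (_ / _), div_mul_div_cancel₀ (by positivity), div_self hxn.ne',
      one_mul]

lemma prod_sq_mul_le_sq_gammaHalfRatio (hx : 0 < x) (n : ℕ) :
    (∏ j ∈ Finset.range n, (x + j) / (x + j + 1 / 2)) ^ 2 * (x + n - 1 / 4) ≤
      gammaHalfRatio x ^ 2 := by
  rw [gammaHalfRatio_eq_prod_mul hx n, mul_pow]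
  gcongr
  exact sub_quarter_le_sq_gammaHalfRatio (by positivity)

lemma sq_gammaHalfRatio_le_prod_sq_mul (hx : 0 < x) (n : ℕ) :
    gammaHalfRatio x ^ 2 ≤ (∏ j ∈ Finset.range n, (x + j) / (x + j + 1 / 2)) ^ 2 *
      (x + n - 1 / 4 + 1 / (16 * (x + n))) := by
  rw [gammaHalfRatio_eq_prod_mul hx n, mul_pow]
  gcongr
  exact sq_gammaHalfRatio_le (by positivity)

lemma continuousOn_gammaHalfRatio : ContinuousOn gammaHalfRatio (Ioi 0) := by
  have hΓ : ContinuousOn Gamma (Ioi 0) := fun z (hz : 0 < z) ↦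
    (differentiableAt_Gamma fun m ↦ by linarith [(m.cast_nonneg : (0 : ℝ) ≤ m)]).continuousAt
      |>.continuousWithinAt
  refine (hΓ.comp (continuousOn_id.add continuousOn_const) fun z (hz : 0 < z) ↦ ?_).div hΓ
    fun z hz ↦ (Gamma_pos_of_pos hz).ne'
  show (0 : ℝ) < z + 1 / 2
  linarith

end gammaHalfRatio

lemma norm_exp_mul_I_sub_taylor_le {x : ℝ} (hx : |x| ≤ 1) :
    ‖Complex.exp (x * Complex.I) - ∑ m ∈ Finset.range 8, (x * Complex.I) ^ m / m.factorial‖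
      ≤ |x| ^ 8 / 35840 := by
  have hnorm : ‖(x : ℂ) * Complex.I‖ = |x| := by simp
  have := Complex.exp_bound (x := x * Complex.I) (hnorm ▸ hx) (n := 8) (by norm_num)
  rw [hnorm] at this
  norm_num [Nat.factorial] at this
  linarith

lemma abs_cos_sub_taylor_le {x : ℝ} (hx : |x| ≤ 1) :
    |cos x - (1 - x ^ 2 / 2 + x ^ 4 / 24 - x ^ 6 / 720)| ≤ |x| ^ 8 / 35840 := by
  refine le_trans (le_of_eq ?_) ((Complex.abs_re_le_norm _).trans (norm_exp_mul_I_sub_taylor_le hx))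
  simp [Finset.sum_range_succ, Nat.factorial, pow_succ, Complex.exp_ofReal_mul_I_re]
  ring_nf

lemma abs_sin_sub_taylor_le {x : ℝ} (hx : |x| ≤ 1) :
    |sin x - (x - x ^ 3 / 6 + x ^ 5 / 120 - x ^ 7 / 5040)| ≤ |x| ^ 8 / 35840 := by
  refine le_trans (le_of_eq ?_) ((Complex.abs_im_le_norm _).trans (norm_exp_mul_I_sub_taylor_le hx))
  simp [Finset.sum_range_succ, Nat.factorial, pow_succ, Complex.exp_ofReal_mul_I_im]
  ring_nf

lemma tan_le_taylor {x : ℝ} (h₀ : 0 ≤ x) (h₁ : x ≤ 1) :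
    tan x ≤ (x - x ^ 3 / 6 + x ^ 5 / 120 - x ^ 7 / 5040 + x ^ 8 / 35840) /
      (1 - x ^ 2 / 2 + x ^ 4 / 24 - x ^ 6 / 720 - x ^ 8 / 35840) := by
  have hx : |x| ≤ 1 := by rwa [abs_of_nonneg h₀]
  have hcos := abs_sub_le_iff.1 (abs_cos_sub_taylor_le hx)
  have hsin := abs_sub_le_iff.1 (abs_sin_sub_taylor_le hx)
  rw [abs_of_nonneg h₀] at hcos hsin
  have hx2 : x ^ 2 ≤ 1 := by nlinarith
  have hC : 0 < 1 - x ^ 2 / 2 + x ^ 4 / 24 - x ^ 6 / 720 - x ^ 8 / 35840 := by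
    nlinarith [pow_le_one₀ (n := 8) h₀ h₁, pow_nonneg h₀ 4]
  rw [tan_eq_sin_div_cos]
  exact div_le_div₀ (by linarith [sin_nonneg_of_nonneg_of_le_pi h₀ (by linarith [pi_gt_three])])
    (by linarith) hC (by linarith)

lemma taylor_le_tan {x : ℝ} (h₀ : 0 ≤ x) (h₁ : x ≤ 1) :
    (x - x ^ 3 / 6 + x ^ 5 / 120 - x ^ 7 / 5040 - x ^ 8 / 35840) /
      (1 - x ^ 2 / 2 + x ^ 4 / 24 - x ^ 6 / 720 + x ^ 8 / 35840) ≤ tan x := by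
  have hx : |x| ≤ 1 := by rwa [abs_of_nonneg h₀]
  have hcos := abs_sub_le_iff.1 (abs_cos_sub_taylor_le hx)
  have hsin := abs_sub_le_iff.1 (abs_sin_sub_taylor_le hx)
  rw [abs_of_nonneg h₀] at hcos hsin
  have hC : 0 < cos x :=
    cos_pos_of_mem_Ioo ⟨by linarith [pi_gt_three], by linarith [pi_gt_three]⟩
  rw [tan_eq_sin_div_cos]
  exact div_le_div₀ (sin_nonneg_of_nonneg_of_le_pi h₀ (by linarith [pi_gt_three])) (by linarith)
    hC (by linarith)

theorem StrictMonoOn.existsUnique_eq_zero_mem_Ioo {F : ℝ → ℝ} {S : Set ℝ} {a b : ℝ}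
    (hF : StrictMonoOn F S) (hab : a ≤ b) (hS : Icc a b ⊆ S) (hcont : ContinuousOn F (Icc a b))
    (ha : F a < 0) (hb : 0 < F b) :
    (∃! c, c ∈ S ∧ F c = 0) ∧ ∀ c ∈ S, F c = 0 → c ∈ Ioo a b := by
  obtain ⟨c, hc, hFc⟩ := intermediate_value_Ioo hab hcont ⟨ha, hb⟩
  have hcS : c ∈ S := hS (Ioo_subset_Icc_self hc)
  refine ⟨⟨c, ⟨hcS, hFc⟩, fun d ⟨hdS, hFd⟩ ↦ hF.injOn hdS hcS (hFd.trans hFc.symm)⟩,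
    fun d hdS hFd ↦ ⟨?_, ?_⟩⟩
  · exact (hF.lt_iff_lt (hS (left_mem_Icc.2 hab)) hdS).1 (hFd ▸ ha)
  · exact (hF.lt_iff_lt hdS (hS (right_mem_Icc.2 hab))).1 (hFd ▸ hb)

noncomputable def hardyTanSide (c : ℝ) : ℝ := √c * tan (√c * (π / 2))

noncomputable def hardyGammaSide (c : ℝ) : ℝ :=
  2 * gammaHalfRatio ((1 + √(1 - 4 * c)) / 4) ^ 2

lemma hardyEq_two_pi_iff {c : ℝ} :
    hardyEq c (2 * π) ↔ hardyTanSide c - hardyGammaSide c = 0 := by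
  rw [sub_eq_zero, hardyEq, hardyTanSide, hardyGammaSide, gammaHalfRatio,
    show (2 * π - π) / 2 = π / 2 by ring,
    show (3 + √(1 - 4 * c)) / 4 = (1 + √(1 - 4 * c)) / 4 + 1 / 2 by ring]

lemma mul_pi_div_two_mem_Ioo {s : ℝ} (h₀ : 0 ≤ s) (h₁ : s < 1) :
    s * (π / 2) ∈ Ioo (-(π / 2)) (π / 2) :=
  ⟨by nlinarith [pi_pos], by nlinarith [pi_pos]⟩

lemma sqrt_lt_one_of_mem_Ico {c : ℝ} (hc : c ∈ Ico 0 1) : √c < 1 :=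
  (sqrt_lt_sqrt hc.1 hc.2).trans_eq sqrt_one

lemma strictMonoOn_hardyTanSide : StrictMonoOn hardyTanSide (Ico 0 1) := by
  intro c hc d hd hcd
  have hsc : √c < √d := sqrt_lt_sqrt hc.1 hcd
  have hc' := mul_pi_div_two_mem_Ioo (sqrt_nonneg c) (sqrt_lt_one_of_mem_Ico hc)
  have hd' := mul_pi_div_two_mem_Ioo (sqrt_nonneg d) (sqrt_lt_one_of_mem_Ico hd)
  exact mul_lt_mul'' hsc (strictMonoOn_tan hc' hd' (by gcongr)) (sqrt_nonneg c)
    (tan_nonneg_of_nonneg_of_le_pi_div_two (by positivity) hc'.2.le)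

lemma continuousOn_hardyTanSide : ContinuousOn hardyTanSide (Ico 0 1) :=
  continuous_sqrt.continuousOn.mul <| continuousOn_tan.comp (by fun_prop) fun c hc ↦
    (cos_pos_of_mem_Ioo (mul_pi_div_two_mem_Ioo (sqrt_nonneg c) (sqrt_lt_one_of_mem_Ico hc))).ne'

lemma antitone_hardyGammaSide : Antitone hardyGammaSide := by
  intro c d hcd
  have hx : 0 < (1 + √(1 - 4 * d)) / 4 := by positivity
  have := gammaHalfRatio_monotoneOn hx (show 0 < (1 + √(1 - 4 * c)) / 4 by positivity)
    (by gcongr)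
  unfold hardyGammaSide
  gcongr
  exact (gammaHalfRatio_pos hx).le

lemma continuous_hardyGammaSide : Continuous hardyGammaSide :=
  continuous_const.mul ((continuousOn_gammaHalfRatio.comp_continuous (by fun_prop)
    fun c ↦ show 0 < (1 + √(1 - 4 * c)) / 4 by positivity).pow 2)

lemma hardyTanSide_sq {t : ℝ} (ht : 0 ≤ t) : hardyTanSide (t ^ 2) = t * tan (t * (π / 2)) := by
  rw [hardyTanSide, sqrt_sq ht]

lemma hardyTanSide_lt : hardyTanSide 0.2053 < 0.3909 := by
  set t : ℝ := 0.45311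
  set θ : ℝ := t * (3.141593 / 2)
  have hθ : t * (π / 2) ≤ θ := by have := pi_lt_d6; simp only [θ]; gcongr
  calc hardyTanSide 0.2053 ≤ hardyTanSide (t ^ 2) :=
        strictMonoOn_hardyTanSide.monotoneOn
          ⟨by norm_num, by norm_num⟩ ⟨by norm_num, by norm_num⟩
          (by norm_num [t])
    _ = t * tan (t * (π / 2)) := hardyTanSide_sq (by norm_num)
    _ ≤ t * tan θ := by
        gcongr
        exact strictMonoOn_tan.monotoneOn (mul_pi_div_two_mem_Ioo (by norm_num) (by norm_num))
          ⟨by norm_num [θ]; linarith [pi_pos], by norm_num [θ]; linarith [pi_gt_d6]⟩ hθ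
    _ ≤ t * ((θ - θ ^ 3 / 6 + θ ^ 5 / 120 - θ ^ 7 / 5040 + θ ^ 8 / 35840) /
          (1 - θ ^ 2 / 2 + θ ^ 4 / 24 - θ ^ 6 / 720 - θ ^ 8 / 35840)) := by
        gcongr; exact tan_le_taylor (by norm_num [θ]) (by norm_num [θ, t])
    _ < 0.3909 := by norm_num [θ, t]

lemma lt_hardyTanSide : 0.391 < hardyTanSide 0.2054 := by
  set t : ℝ := 0.45321
  set θ : ℝ := t * (3.141592 / 2)
  have hθ : θ ≤ t * (π / 2) := by have := pi_gt_d6; simp only [θ]; gcongr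
  have hθ₀ : 0 ≤ θ := by norm_num [θ]
  calc (0.391 : ℝ) < t * ((θ - θ ^ 3 / 6 + θ ^ 5 / 120 - θ ^ 7 / 5040 - θ ^ 8 / 35840) /
          (1 - θ ^ 2 / 2 + θ ^ 4 / 24 - θ ^ 6 / 720 + θ ^ 8 / 35840)) := by norm_num [θ, t]
    _ ≤ t * tan θ := by gcongr; exact taylor_le_tan hθ₀ (by norm_num [θ, t])
    _ ≤ t * tan (t * (π / 2)) := by
        gcongr
        exact strictMonoOn_tan.monotoneOn
          ⟨by linarith [pi_pos], by norm_num [θ]; linarith [pi_gt_d6]⟩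
          (mul_pi_div_two_mem_Ioo (by norm_num) (by norm_num)) hθ
    _ = hardyTanSide (t ^ 2) := (hardyTanSide_sq (by norm_num)).symm
    _ ≤ hardyTanSide 0.2054 :=
        strictMonoOn_hardyTanSide.monotoneOn
          ⟨by norm_num, by norm_num⟩ ⟨by norm_num, by norm_num⟩
          (by norm_num [t])

lemma le_hardyGammaSide : 0.3909 ≤ hardyGammaSide 0.2053 := by
  have hx : (0.355711 : ℝ) ≤ (1 + √(1 - 4 * 0.2053)) / 4 := by
    have : 4 * 0.355711 - 1 ≤ √(1 - 4 * 0.2053 : ℝ) :=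
      (le_sqrt' (by norm_num)).2 (by norm_num)
    linarith
  have hR := prod_sq_mul_le_sq_gammaHalfRatio (x := 0.355711) (by norm_num) 20
  norm_num [Finset.prod_range_succ] at hR
  calc (0.3909 : ℝ) ≤ 2 * gammaHalfRatio 0.355711 ^ 2 := by linarith
    _ ≤ hardyGammaSide 0.2053 := by
        unfold hardyGammaSide
        gcongr
        · exact (gammaHalfRatio_pos (by norm_num)).le
        · have hx₀ : (0 : ℝ) < 0.355711 := by norm_num
          exact gammaHalfRatio_monotoneOn hx₀ (hx₀.trans_le hx) hx

lemma hardyGammaSide_le : hardyGammaSide 0.2054 ≤ 0.391 := by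
  have hx : (1 + √(1 - 4 * 0.2054)) / 4 ≤ (0.355594 : ℝ) := by
    have : √(1 - 4 * 0.2054 : ℝ) ≤ 4 * 0.355594 - 1 :=
      (sqrt_le_left (by norm_num)).2 (by norm_num)
    linarith
  have hR := sq_gammaHalfRatio_le_prod_sq_mul (x := 0.355594) (by norm_num) 20
  norm_num [Finset.prod_range_succ] at hR
  calc hardyGammaSide 0.2054 ≤ 2 * gammaHalfRatio 0.355594 ^ 2 := by
        unfold hardyGammaSide
        have hx₀ : (0 : ℝ) < (1 + √(1 - 4 * 0.2054)) / 4 := by positivity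
        gcongr
        · exact (gammaHalfRatio_pos hx₀).le
        · exact gammaHalfRatio_monotoneOn hx₀ (by norm_num) hx
    _ ≤ 0.391 := by linarith

/-- The unique `c ∈ (0, 1/4]` solving the Hardy-constant equation for `β = 2π` (i.e.
`√c·tan(√c·π/2) = 2 (Γ((3+√(1−4c))/4)/Γ((1+√(1−4c))/4))²`) lies in `(0.2053, 0.2054)`. -/
theorem hardy_constant_two_pi_bounds :
    (∃! c : ℝ, c ∈ Set.Ioc (0 : ℝ) (1 / 4) ∧ hardyEq c (2 * Real.pi)) ∧
    ∀ c : ℝ, c ∈ Set.Ioc (0 : ℝ) (1 / 4) → hardyEq c (2 * Real.pi) →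
      (0.2053 : ℝ) < c ∧ c < (0.2054 : ℝ) := by
  have hS : Ioc (0 : ℝ) (1 / 4) ⊆ Ico 0 1 := fun c hc ↦
    ⟨hc.1.le, hc.2.trans_lt (by norm_num)⟩
  have hIcc : Icc (0.2053 : ℝ) 0.2054 ⊆ Ioc 0 (1 / 4) :=
    Icc_subset_Ioc_iff (by norm_num) |>.2 ⟨by norm_num, by norm_num⟩
  have hmono : StrictMonoOn (fun c ↦ hardyTanSide c - hardyGammaSide c) (Ioc 0 (1 / 4)) :=
    fun c hc d hd hcd ↦ by
      linarith [strictMonoOn_hardyTanSide (hS hc) (hS hd) hcd, antitone_hardyGammaSide hcd.le]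
  have hcont := (continuousOn_hardyTanSide.mono (hIcc.trans hS)).sub
    continuous_hardyGammaSide.continuousOn
  simp_rw [hardyEq_two_pi_iff]
  exact hmono.existsUnique_eq_zero_mem_Ioo (by norm_num) hIcc hcont
    (by linarith [hardyTanSide_lt, le_hardyGammaSide])
    (by linarith [lt_hardyTanSide, hardyGammaSide_le])
end

section
/- Let π ≤ β ≤ 2π and let ψ be the normalized positive solution of the boundary value problem with c = c_β, and set g(θ) = ψ'(θ)·sin θ/ψ(θ). Then g is monotone decreasing on (0, π/2]. -/
open Real Set Filter
open scoped Classical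

/-- `c = c_β`: for `β ≤ βcr`, `c = 1/4`; for `β > βcr`, `c` is the unique solution in
`(0, 1/4]` of the Hardy-constant equation for `β`. -/
def isHardyConst (βcr β c : ℝ) : Prop :=
  (β ≤ βcr ∧ c = 1 / 4) ∨ (βcr < β ∧ c ∈ Set.Ioc (0 : ℝ) (1 / 4) ∧ hardyEq c β)

/-- The potential `V` on `(0, β)`. -/
noncomputable def Vpot (β θ : ℝ) : ℝ :=
  if θ < Real.pi / 2 then 1 / Real.sin θ ^ 2
  else if θ < β - Real.pi / 2 then 1
  else 1 / Real.sin (β - θ) ^ 2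

/-!
Put `g = ψ' sin / ψ`. On `(0, π/2)`, where `V = 1 / sin²`, the equation for `ψ` becomes the Riccati
equation `g' sin = -Q(g)` with `Q(g) = g² - g cos + c`, so it suffices that `Q(g) ≥ 0` there.
Wherever `Q(g) = 0` we have `g > 0` and `(Q ∘ g)' = g sin > 0`, so once `Q(g)` is nonnegative it
stays so. If instead `Q(g(θ₀)) < 0`, then `Q(g) < 0` on all of `(0, θ₀]`; there `g` increases, so
`g ≤ g(θ₀) < α` because `α` is the larger root of `y² - y + c`. Near `0` this gives
`ψ'/ψ ≤ M/θ` for some `M < α`, hence `ψ ≳ θ^M`, contradicting `ψ(θ)/θ^α → 1`.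
-/

open Topology

theorem lt_of_sq_sub_mul_add_neg {y t c : ℝ} (ht : t ≤ 1) (h : y ^ 2 - y * t + c < 0) :
    y < (1 + √(1 - 4 * c)) / 2 := by
  rcases le_or_gt y 0 with hy | hy
  · linarith [sqrt_nonneg (1 - 4 * c)]
  · have hroot : (2 * y - 1) ^ 2 < 1 - 4 * c := by nlinarith
    have := lt_sqrt_of_sq_lt hroot
    linarith

theorem nonneg_of_hasDerivWithinAt_pos_of_eq_zero {f f' : ℝ → ℝ} {a b : ℝ}
    (hf : ContinuousOn f (Icc a b)) (hf' : ∀ x ∈ Ico a b, HasDerivWithinAt f (f' x) (Ici x) x)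
    (ha : 0 ≤ f a) (hzero : ∀ x ∈ Ico a b, f x = 0 → 0 < f' x) :
    ∀ ⦃x⦄, x ∈ Icc a b → 0 ≤ f x := fun _ hx =>
  neg_nonpos.1 <| image_le_of_deriv_right_lt_deriv_boundary (f := fun x => -f x) hf.neg
    (fun x hx => (hf' x hx).neg) (neg_nonpos.2 ha) (fun _ => hasDerivAt_const _ 0)
    (fun x hx hfx => neg_neg_of_pos (hzero x hx (neg_eq_zero.1 hfx))) hx

theorem eventually_mul_lt_mul_sin {a b : ℝ} (hab : a < b) :
    ∀ᶠ θ in 𝓝[>] 0, a * θ < b * sin θ := by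
  have hsinc : Tendsto (fun θ => b * sinc θ) (𝓝[>] 0) (𝓝 b) := by
    simpa using ((continuous_sinc.tendsto 0).const_mul b).mono_left nhdsWithin_le_nhds
  filter_upwards [hsinc.eventually_const_lt hab, self_mem_nhdsWithin] with θ hθ (hθpos : 0 < θ)
  rw [sinc_of_ne_zero hθpos.ne', mul_div_assoc', lt_div_iff₀ hθpos] at hθ
  exact hθ

theorem antitoneOn_div_rpow_of_hasDerivAt {ψ ψ' : ℝ → ℝ} {M δ : ℝ}
    (hder : ∀ θ ∈ Ioo 0 δ, HasDerivAt ψ (ψ' θ) θ)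
    (hle : ∀ θ ∈ Ioo 0 δ, ψ' θ * θ ≤ M * ψ θ) :
    AntitoneOn (fun θ => ψ θ / θ ^ M) (Ioo 0 δ) := by
  have hF : ∀ θ ∈ Ioo 0 δ, HasDerivAt (fun θ => ψ θ / θ ^ M)
      ((ψ' θ * θ ^ M - ψ θ * (M * θ ^ (M - 1))) / (θ ^ M) ^ 2) θ := fun θ hθ =>
    (hder θ hθ).div (hasDerivAt_rpow_const (Or.inl hθ.1.ne'))
      (rpow_pos_of_pos hθ.1 M).ne'
  refine antitoneOn_of_hasDerivWithinAt_nonpos (convex_Ioo 0 δ)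
    (f' := fun θ => (ψ' θ * θ ^ M - ψ θ * (M * θ ^ (M - 1))) / (θ ^ M) ^ 2)
    (fun θ hθ => (hF θ hθ).continuousAt.continuousWithinAt) (fun θ hθ => ?_) (fun θ hθ => ?_)
  · rw [interior_Ioo] at hθ
    exact (hF θ hθ).hasDerivWithinAt
  · rw [interior_Ioo] at hθ
    have hsplit : ψ' θ * θ ^ M - ψ θ * (M * θ ^ (M - 1)) = θ ^ (M - 1) * (ψ' θ * θ - M * ψ θ) := by
      have hθ0 := hθ.1.ne'
      rw [rpow_sub_one hθ0]
      field_simp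
    rw [hsplit]
    exact div_nonpos_of_nonpos_of_nonneg
      (mul_nonpos_of_nonneg_of_nonpos (rpow_pos_of_pos hθ.1 _).le
        (sub_nonpos.2 (hle θ hθ))) (sq_nonneg _)

theorem tendsto_div_rpow_atTop_of_mul_deriv_le {ψ ψ' : ℝ → ℝ} {M α : ℝ} (hMα : M < α)
    (h : ∀ᶠ θ in 𝓝[>] 0, 0 < ψ θ ∧ HasDerivAt ψ (ψ' θ) θ ∧ ψ' θ * θ ≤ M * ψ θ) :
    Tendsto (fun θ => ψ θ / θ ^ α) (𝓝[>] 0) atTop := by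
  obtain ⟨δ, hδ, hsub⟩ := mem_nhdsGT_iff_exists_Ioo_subset.1 h
  have hanti := antitoneOn_div_rpow_of_hasDerivAt (fun θ hθ => (hsub hθ).2.1)
    (fun θ hθ => (hsub hθ).2.2)
  have hmid : δ / 2 ∈ Ioo 0 δ := ⟨half_pos hδ, half_lt_self hδ⟩
  set C := ψ (δ / 2) / (δ / 2) ^ M
  have hC : 0 < C := div_pos (hsub hmid).1 (rpow_pos_of_pos hmid.1 M)
  refine tendsto_atTop_mono' _ ?_
    ((tendsto_rpow_neg_nhdsGT_zero (sub_neg.2 hMα)).const_mul_atTop hC)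
  filter_upwards [Ioo_mem_nhdsGT hmid.1] with θ hθ
  have hθδ : θ ∈ Ioo 0 δ := ⟨hθ.1, hθ.2.trans hmid.2⟩
  calc C * θ ^ (M - α) ≤ ψ θ / θ ^ M * θ ^ (M - α) :=
        mul_le_mul_of_nonneg_right (hanti hθδ hmid hθ.2.le) (rpow_pos_of_pos hθ.1 _).le
    _ = ψ θ / θ ^ α := by
        have := (rpow_pos_of_pos hθ.1 M).ne'
        rw [rpow_sub hθ.1]
        field_simp

/-- The quadratic `Q` of the Riccati equation `g' sin θ = -Q(g, θ)`. -/
noncomputable def riccatiPoly (c y θ : ℝ) : ℝ := y ^ 2 - y * cos θ + c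

theorem pos_of_riccatiPoly_nonpos {c y θ : ℝ} (hc : 0 < c) (hcos : 0 ≤ cos θ)
    (h : riccatiPoly c y θ ≤ 0) : 0 < y := by
  simp only [riccatiPoly] at h
  by_contra! hy
  nlinarith [mul_nonneg (neg_nonneg.2 hy) hcos]

theorem hasDerivAt_riccatiPoly {c x g' : ℝ} {g : ℝ → ℝ} (hg : HasDerivAt g g' x) :
    HasDerivAt (fun θ => riccatiPoly c (g θ) θ) ((2 * g x - cos x) * g' + g x * sin x) x :=
  (((hg.pow 2).sub (hg.mul (hasDerivAt_cos x))).add_const c).congr_deriv (by ring)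

theorem hasDerivAt_mul_sin_div {c x : ℝ} {ψ ψ' : ℝ → ℝ} (hψ : ψ x ≠ 0) (hsin : sin x ≠ 0)
    (hder : HasDerivAt ψ (ψ' x) x) (hode : HasDerivAt ψ' (-(c * ψ x / sin x ^ 2)) x) :
    HasDerivAt (fun θ => ψ' θ * sin θ / ψ θ)
      (-riccatiPoly c (ψ' x * sin x / ψ x) x / sin x) x := by
  refine ((hode.mul (hasDerivAt_sin x)).div hder hψ).congr_deriv ?_
  simp only [riccatiPoly, Pi.mul_apply]
  field_simp
  ring

theorem riccatiPoly_nonneg_of_le {c a b : ℝ} {g : ℝ → ℝ} (hc : 0 < c)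
    (hg : ∀ x ∈ Ioo 0 (π / 2), HasDerivAt g (-riccatiPoly c (g x) x / sin x) x)
    (ha : 0 < a) (hab : a ≤ b) (hb : b < π / 2) (h : 0 ≤ riccatiPoly c (g a) a) :
    0 ≤ riccatiPoly c (g b) b := by
  have hsub : Icc a b ⊆ Ioo 0 (π / 2) := Icc_subset_Ioo ha hb
  have hQ := fun x (hx : x ∈ Icc a b) => hasDerivAt_riccatiPoly (c := c) (hg x (hsub hx))
  refine nonneg_of_hasDerivWithinAt_pos_of_eq_zero
    (fun x hx => (hQ x hx).continuousAt.continuousWithinAt)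
    (fun x hx => (hQ x (Ico_subset_Icc_self hx)).hasDerivWithinAt) h (fun x hx hzero => ?_)
    ⟨hab, le_rfl⟩
  have hx := hsub (Ico_subset_Icc_self hx)
  have hsin : 0 < sin x := sin_pos_of_pos_of_lt_pi hx.1 (by linarith [hx.2, pi_pos])
  have hcos : 0 < cos x := cos_pos_of_mem_Ioo ⟨by linarith [hx.1, pi_pos], hx.2⟩
  rw [hzero, neg_zero, zero_div, mul_zero, zero_add]
  exact mul_pos (pos_of_riccatiPoly_nonpos hc hcos.le hzero.le) hsin

theorem tendsto_div_rpow_atTop_of_riccatiPoly_neg {c α θ₀ : ℝ} {ψ ψ' : ℝ → ℝ}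
    (hα : α = (1 + √(1 - 4 * c)) / 2) (hθ₀ : θ₀ ∈ Ioo 0 (π / 2))
    (hpos : ∀ θ ∈ Ioc 0 θ₀, 0 < ψ θ) (hder : ∀ θ ∈ Ioc 0 θ₀, HasDerivAt ψ (ψ' θ) θ)
    (hg : ∀ θ ∈ Ioc 0 θ₀, HasDerivAt (fun θ => ψ' θ * sin θ / ψ θ)
      (-riccatiPoly c (ψ' θ * sin θ / ψ θ) θ / sin θ) θ)
    (hneg : ∀ θ ∈ Ioc 0 θ₀, riccatiPoly c (ψ' θ * sin θ / ψ θ) θ < 0) :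
    Tendsto (fun θ => ψ θ / θ ^ α) (𝓝[>] 0) atTop := by
  set g := fun θ => ψ' θ * sin θ / ψ θ
  have hsin : ∀ θ ∈ Ioc 0 θ₀, 0 < sin θ := fun θ hθ =>
    sin_pos_of_pos_of_lt_pi hθ.1 (by linarith [hθ.2, hθ₀.2, pi_pos])
  have hmono : MonotoneOn g (Ioc 0 θ₀) := by
    refine monotoneOn_of_hasDerivWithinAt_nonneg (convex_Ioc 0 θ₀)
      (f' := fun θ => -riccatiPoly c (g θ) θ / sin θ)
      (fun θ hθ => (hg θ hθ).continuousAt.continuousWithinAt) (fun θ hθ => ?_) (fun θ hθ => ?_)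
      <;> rw [interior_Ioc] at hθ
    · exact (hg θ (Ioo_subset_Ioc_self hθ)).hasDerivWithinAt
    · have hθ' := Ioo_subset_Ioc_self hθ
      exact div_nonneg (neg_nonneg.2 (hneg θ hθ').le) (hsin θ hθ').le
  have hθ₀mem : θ₀ ∈ Ioc 0 θ₀ := ⟨hθ₀.1, le_rfl⟩
  have hgα : g θ₀ < α := hα ▸ lt_of_sq_sub_mul_add_neg (cos_le_one θ₀) (hneg θ₀ hθ₀mem)
  obtain ⟨M, hgM, hMα⟩ := exists_between hgα
  refine tendsto_div_rpow_atTop_of_mul_deriv_le (ψ' := ψ') hMα ?_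
  filter_upwards [eventually_mul_lt_mul_sin hgM, Ioo_mem_nhdsGT hθ₀.1] with θ hθsin hθ
  have hθ' : θ ∈ Ioc 0 θ₀ := Ioo_subset_Ioc_self hθ
  have hψ := hpos θ hθ'
  refine ⟨hψ, hder θ hθ', le_of_mul_le_mul_left ?_ (hsin θ hθ')⟩
  have hgθ : ψ' θ * sin θ ≤ g θ₀ * ψ θ := (div_le_iff₀ hψ).1 (hmono hθ' hθ₀mem hθ.2.le)
  calc sin θ * (ψ' θ * θ) = ψ' θ * sin θ * θ := by ring
    _ ≤ g θ₀ * ψ θ * θ := mul_le_mul_of_nonneg_right hgθ hθ.1.le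
    _ = g θ₀ * θ * ψ θ := by ring
    _ ≤ M * sin θ * ψ θ := mul_le_mul_of_nonneg_right hθsin.le hψ.le
    _ = sin θ * (M * ψ θ) := by ring

theorem antitoneOn_mul_sin_div {c α L : ℝ} {ψ ψ' : ℝ → ℝ} (hc : 0 < c)
    (hα : α = (1 + √(1 - 4 * c)) / 2)
    (hpos : ∀ θ ∈ Ioc 0 (π / 2), 0 < ψ θ)
    (hder : ∀ θ ∈ Ioc 0 (π / 2), HasDerivAt ψ (ψ' θ) θ)
    (hψ' : ContinuousOn ψ' (Ioc 0 (π / 2)))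
    (hode : ∀ θ ∈ Ioo 0 (π / 2), HasDerivAt ψ' (-(c * ψ θ / sin θ ^ 2)) θ)
    (hlim : Tendsto (fun θ => ψ θ / θ ^ α) (𝓝[>] 0) (𝓝 L)) :
    AntitoneOn (fun θ => ψ' θ * sin θ / ψ θ) (Ioc 0 (π / 2)) := by
  have hsin : ∀ θ ∈ Ioc 0 (π / 2), 0 < sin θ := fun θ hθ =>
    sin_pos_of_pos_of_lt_pi hθ.1 (by linarith [hθ.2, pi_pos])
  have hg : ∀ θ ∈ Ioo 0 (π / 2), HasDerivAt (fun θ => ψ' θ * sin θ / ψ θ)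
      (-riccatiPoly c (ψ' θ * sin θ / ψ θ) θ / sin θ) θ := fun θ hθ =>
    have hθ' := Ioo_subset_Ioc_self hθ
    hasDerivAt_mul_sin_div (hpos θ hθ').ne' (hsin θ hθ').ne' (hder θ hθ') (hode θ hθ)
  have hQ : ∀ θ ∈ Ioo 0 (π / 2), 0 ≤ riccatiPoly c (ψ' θ * sin θ / ψ θ) θ := by
    intro θ₀ hθ₀
    by_contra! hneg
    have hneg' : ∀ θ ∈ Ioc 0 θ₀, riccatiPoly c (ψ' θ * sin θ / ψ θ) θ < 0 := fun θ hθ => by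
      by_contra! h
      exact hneg.not_ge (riccatiPoly_nonneg_of_le hc hg hθ.1 hθ.2 hθ₀.2 h)
    have hsub : Ioc 0 θ₀ ⊆ Ioc 0 (π / 2) := Ioc_subset_Ioc_right hθ₀.2.le
    exact not_tendsto_nhds_of_tendsto_atTop (tendsto_div_rpow_atTop_of_riccatiPoly_neg hα hθ₀
      (fun θ hθ => hpos θ (hsub hθ)) (fun θ hθ => hder θ (hsub hθ))
      (fun θ hθ => hg θ (Ioc_subset_Ioo_right hθ₀.2 hθ)) hneg') L hlim
  refine antitoneOn_of_hasDerivWithinAt_nonpos (convex_Ioc 0 (π / 2))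
    (f' := fun θ => -riccatiPoly c (ψ' θ * sin θ / ψ θ) θ / sin θ)
    ((hψ'.mul continuous_sin.continuousOn).div
      (fun θ hθ => (hder θ hθ).continuousAt.continuousWithinAt) (fun θ hθ => (hpos θ hθ).ne'))
    (fun θ hθ => ?_) (fun θ hθ => ?_) <;> rw [interior_Ioc] at hθ
  · exact (hg θ hθ).hasDerivWithinAt
  · exact div_nonpos_of_nonpos_of_nonneg (neg_nonpos.2 (hQ θ hθ))
      (hsin θ (Ioo_subset_Ioc_self hθ)).le

theorem isHardyConst_pos {βcr β c : ℝ} (h : isHardyConst βcr β c) : 0 < c := by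
  rcases h with ⟨_, rfl⟩ | ⟨_, hc, _⟩
  · norm_num
  · exact hc.1

theorem Vpot_of_lt {β θ : ℝ} (hθ : θ < π / 2) : Vpot β θ = 1 / sin θ ^ 2 := if_pos hθ

theorem g_antitone_general
    (β βcr cβ α : ℝ) (ψ ψ' : ℝ → ℝ)
    (hβ1 : Real.pi ≤ β)
    (hcβ : isHardyConst βcr β cβ)
    (hα : α = (1 + Real.sqrt (1 - 4 * cβ)) / 2)
    (hpos : ∀ θ ∈ Set.Ioo 0 β, 0 < ψ θ)
    (hder : ∀ θ ∈ Set.Ioo 0 β, HasDerivAt ψ (ψ' θ) θ)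
    (hode : ∀ θ ∈ Set.Ioo 0 β, HasDerivAt ψ' (-(cβ * Vpot β θ * ψ θ)) θ)
    (hnorm : Filter.Tendsto (fun θ => ψ θ / θ ^ α) (nhdsWithin 0 (Set.Ioi 0)) (nhds 1)) :
    AntitoneOn (fun θ => ψ' θ * Real.sin θ / ψ θ) (Set.Ioc 0 (Real.pi / 2)) := by
  have hsub : Ioc 0 (π / 2) ⊆ Ioo 0 β := fun θ hθ => ⟨hθ.1, by linarith [hθ.2, pi_pos]⟩
  refine antitoneOn_mul_sin_div (isHardyConst_pos hcβ) hα (fun θ hθ => hpos θ (hsub hθ))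
    (fun θ hθ => hder θ (hsub hθ))
    (fun θ hθ => (hode θ (hsub hθ)).continuousAt.continuousWithinAt) (fun θ hθ => ?_) hnorm
  convert hode θ (hsub (Ioo_subset_Ioc_self hθ)) using 2
  rw [Vpot_of_lt hθ.2]
  ring

/-- Let `ψ` be the normalized positive solution (extended symmetrically to `(0, β)`) of
`−ψ'' = c_β·V·ψ` with `ψ'(β/2) = 0` and `ψ(θ)/θ^α → 1` as `θ → 0+`, where
`α = (1+√(1−4c_β))/2`.  Then `g(θ) = ψ'(θ)·sin θ/ψ(θ)` is monotone decreasing on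
`(0, π/2]`. -/
theorem g_antitone
    (β βcr cβ α : ℝ) (ψ ψ' : ℝ → ℝ)
    (hβ1 : Real.pi ≤ β) (hβ2 : β ≤ 2 * Real.pi)
    (hβcr : isBetaCr βcr) (hcβ : isHardyConst βcr β cβ)
    (hα : α = (1 + Real.sqrt (1 - 4 * cβ)) / 2)
    (hpos : ∀ θ ∈ Set.Ioo 0 β, 0 < ψ θ)
    (hder : ∀ θ ∈ Set.Ioo 0 β, HasDerivAt ψ (ψ' θ) θ)
    (hode : ∀ θ ∈ Set.Ioo 0 β, HasDerivAt ψ' (-(cβ * Vpot β θ * ψ θ)) θ)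
    (hbc : ψ' (β / 2) = 0)
    (hsym : ∀ θ, ψ (β - θ) = ψ θ)
    (hnorm : Filter.Tendsto (fun θ => ψ θ / θ ^ α) (nhdsWithin 0 (Set.Ioi 0)) (nhds 1)) :
    AntitoneOn (fun θ => ψ' θ * Real.sin θ / ψ θ) (Set.Ioc 0 (Real.pi / 2)) :=
  g_antitone_general β βcr cβ α ψ ψ' hβ1 hcβ hα hpos hder hode hnorm
end

section
/- Let π ≤ β ≤ 2π, let ψ be the normalized positive solution with c = c_β, and set f(θ) = ψ'(θ)/ψ(θ). For π/2 ≤ γ ≤ π let θ₁ ∈ (0, π/2] be the angle determined by cot θ₁ = sin γ. Then ((2 + cos γ)/(1 + sin²γ))·f(θ₁) ≥ f(π/2). -/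
/-!
With `f = ψ'/ψ` the equation becomes the Riccati equation `f' = -c V - f²`. On `[π/2, β/2]`,
where `V = 1`, the quantity `arctan (f/√c) + √c θ` is constant, and `f(β/2) = 0` gives
`f(π/2) = √c tan (√c (β - π)/2) ≤ c (β - π) ≤ π c`, since `tan x ≤ 2x` for `x ≤ π/3`.
On `[θ₁, π/2]`, where `V = 1/sin²`, the function `f - c cot` has derivative `-f² ≤ 0`, so
`f(θ₁) ≥ f(π/2) + c cot θ₁ = f(π/2) + c sin γ`. What remains is the elementary inequality
`π (-cos γ) (1 + cos γ) ≤ (2 + cos γ) sin γ` on `[π/2, π]`.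
-/

open Real Set Filter
open scoped Classical

theorem tan_le_two_mul {x : ℝ} (h0 : 0 ≤ x) (h1 : x ≤ π / 3) : tan x ≤ 2 * x := by
  have hcos : 1 / 2 ≤ cos x := by
    rw [← cos_pi_div_three]
    exact cos_le_cos_of_nonneg_of_le_pi h0 (by linarith [pi_pos]) h1
  rw [tan_eq_sin_div_cos, div_le_iff₀ (by linarith)]
  nlinarith [sin_le h0]

theorem hasDerivAt_div_of_hasDerivAt_neg_mul {ψ ψ' : ℝ → ℝ} {q x : ℝ}
    (hψ : HasDerivAt ψ (ψ' x) x) (hψ' : HasDerivAt ψ' (-(q * ψ x)) x) (hx : ψ x ≠ 0) :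
    HasDerivAt (fun θ => ψ' θ / ψ θ) (-q - (ψ' x / ψ x) ^ 2) x := by
  refine (hψ'.div hψ hx).congr_deriv ?_
  field_simp

section Riccati

variable {f : ℝ → ℝ} {c a b : ℝ}

theorem arctan_div_sqrt_add_mul_eq_of_riccati (hc : 0 < c) (hab : a ≤ b)
    (hcont : ContinuousOn f (Icc a b)) (hf : ∀ x ∈ Ioo a b, HasDerivAt f (-c - f x ^ 2) x) :
    arctan (f a / √c) + √c * a = arctan (f b / √c) + √c * b := by
  rcases hab.eq_or_lt with rfl | hab
  · rfl
  have hsc : 0 < √c := sqrt_pos.2 hc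
  set G := fun x => arctan (f x / √c) + √c * x
  have hGcont : ContinuousOn G (Icc a b) :=
    (continuous_arctan.comp_continuousOn (hcont.div_const _)).add
      (continuousOn_const.mul continuousOn_id)
  have hG : ∀ x ∈ Ioo a b, HasDerivAt G 0 x := by
    intro x hx
    refine (((hasDerivAt_arctan _).comp x ((hf x hx).div_const √c)).add
      ((hasDerivAt_id x).const_mul √c)).congr_deriv ?_
    have hsq : √c ^ 2 = c := sq_sqrt hc.le
    field_simp
    rw [hsq]
    ring
  obtain ⟨x, -, hx⟩ := exists_hasDerivAt_eq_slope G (fun _ => 0) hab hGcont hG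
  rw [eq_comm, div_eq_zero_iff, sub_eq_zero] at hx
  exact (hx.resolve_right (sub_ne_zero.2 hab.ne')).symm

theorem le_two_mul_of_riccati (hc : 0 < c) (hab : a ≤ b)
    (hcont : ContinuousOn f (Icc a b)) (hf : ∀ x ∈ Ioo a b, HasDerivAt f (-c - f x ^ 2) x)
    (hb : f b = 0) (hsmall : √c * (b - a) ≤ π / 3) :
    f a ≤ 2 * c * (b - a) := by
  have hsc : 0 < √c := sqrt_pos.2 hc
  have harctan : arctan (f a / √c) = √c * (b - a) := by
    have := arctan_div_sqrt_add_mul_eq_of_riccati hc hab hcont hf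
    rw [hb, zero_div, arctan_zero] at this
    linarith
  have htan := tan_le_two_mul (by nlinarith) hsmall
  rw [← harctan, tan_arctan, div_le_iff₀ hsc, harctan] at htan
  calc f a ≤ 2 * (√c * (b - a)) * √c := htan
    _ = 2 * (√c * √c) * (b - a) := by ring
    _ = 2 * c * (b - a) := by rw [mul_self_sqrt hc.le]

theorem antitoneOn_sub_mul_cot_of_riccati (ha : 0 < a) (hb : b < π)
    (hcont : ContinuousOn f (Icc a b))
    (hf : ∀ x ∈ Ioo a b, HasDerivAt f (-(c / sin x ^ 2) - f x ^ 2) x) :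
    AntitoneOn (fun x => f x - c * cot x) (Icc a b) := by
  have hsin : ∀ x ∈ Icc a b, sin x ≠ 0 := fun x hx =>
    (sin_pos_of_pos_of_lt_pi (ha.trans_le hx.1) (hx.2.trans_lt hb)).ne'
  have hcot : ∀ x ∈ Icc a b, HasDerivAt cot (-(1 / sin x ^ 2)) x := by
    intro x hx
    simp only [funext cot_eq_cos_div_sin]
    refine ((hasDerivAt_cos x).div (hasDerivAt_sin x) (hsin x hx)).congr_deriv ?_
    have := hsin x hx
    field_simp
    linear_combination -sin_sq_add_cos_sq x
  refine antitoneOn_of_hasDerivWithinAt_nonpos (convex_Icc a b)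
    (hcont.sub (continuousOn_const.mul fun x hx => (hcot x hx).continuousAt.continuousWithinAt))
    (f' := fun x => -(f x ^ 2)) (fun x hx => ?_) (fun x _ => neg_nonpos.2 (sq_nonneg _))
  rw [interior_Icc] at hx
  refine (((hf x hx).sub ((hcot x (Ioo_subset_Icc_self hx)).const_mul c)).congr_deriv
    ?_).hasDerivWithinAt
  ring

end Riccati

theorem isHardyConst.mem_Ioc {βcr β c : ℝ} (h : isHardyConst βcr β c) : c ∈ Ioc 0 (1 / 4) := by
  rcases h with ⟨-, rfl⟩ | ⟨-, hc, -⟩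
  · norm_num
  · exact hc

theorem Vpot_of_lt_pi_div_two {β θ : ℝ} (h : θ < π / 2) : Vpot β θ = 1 / sin θ ^ 2 :=
  if_pos h

theorem Vpot_of_mem_Ico {β θ : ℝ} (h : θ ∈ Ico (π / 2) (β - π / 2)) : Vpot β θ = 1 := by
  rw [Vpot, if_neg h.1.not_gt, if_pos h.2]

theorem pi_mul_neg_cos_mul_one_add_cos_le {γ : ℝ} (hγ1 : π / 2 ≤ γ) (hγ2 : γ ≤ π) :
    π * (-cos γ * (1 + cos γ)) ≤ (2 + cos γ) * sin γ := by
  have hu0 : cos γ ≤ 0 := cos_nonpos_of_pi_div_two_le_of_le hγ1 (by linarith [pi_pos])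
  have hu1 : -1 ≤ cos γ := neg_one_le_cos γ
  have hs : 0 ≤ sin γ := sin_nonneg_of_nonneg_of_le_pi (by linarith [pi_pos]) hγ2
  calc π * (-cos γ * (1 + cos γ)) ≤ 4 * (-cos γ * (1 + cos γ)) :=
        mul_le_mul_of_nonneg_right pi_le_four (mul_nonneg (neg_nonneg.2 hu0) (by linarith))
    _ ≤ (2 + cos γ) * sin γ := by
      apply le_of_sq_le_sq _ (mul_nonneg (by linarith) hs)
      -- after squaring and substituting `sin² = 1 - cos²`, a factor `1 + cos γ` splits off
      have hcubic : 0 ≤ 4 - 19 * cos γ ^ 2 - 17 * cos γ ^ 3 := by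
        nlinarith [mul_nonneg (neg_nonneg.2 hu0) (sq_nonneg (cos γ + 4 / 5))]
      nlinarith [mul_nonneg (by linarith : 0 ≤ 1 + cos γ) hcubic, sin_sq_add_cos_sq γ]

theorem le_two_add_cos_div_mul {F A c γ : ℝ} (hc : 0 ≤ c) (hγ1 : π / 2 ≤ γ) (hγ2 : γ ≤ π)
    (hF : F ≤ π * c) (hA : F + c * sin γ ≤ A) :
    F ≤ (2 + cos γ) / (1 + sin γ ^ 2) * A := by
  have hu0 : cos γ ≤ 0 := cos_nonpos_of_pi_div_two_le_of_le hγ1 (by linarith [pi_pos])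
  have hu1 : -1 ≤ cos γ := neg_one_le_cos γ
  have hX : 0 ≤ -cos γ * (1 + cos γ) := mul_nonneg (neg_nonneg.2 hu0) (by linarith)
  have hsplit : F * (1 + sin γ ^ 2) = (2 + cos γ) * F + F * (-cos γ * (1 + cos γ)) := by
    linear_combination F * sin_sq_add_cos_sq γ
  rw [div_mul_eq_mul_div, le_div_iff₀ (by positivity)]
  nlinarith [mul_le_mul_of_nonneg_right hF hX,
    mul_le_mul_of_nonneg_left (pi_mul_neg_cos_mul_one_add_cos_le hγ1 hγ2) hc,
    mul_le_mul_of_nonneg_left hA (by linarith : 0 ≤ 2 + cos γ)]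

theorem f_theta_one_lower_bound_general
    (β βcr cβ : ℝ) (ψ ψ' : ℝ → ℝ)
    (hβ1 : Real.pi ≤ β) (hβ2 : β ≤ 2 * Real.pi)
    (hcβ : isHardyConst βcr β cβ)
    (hpos : ∀ θ ∈ Set.Ioo 0 β, 0 < ψ θ)
    (hder : ∀ θ ∈ Set.Ioo 0 β, HasDerivAt ψ (ψ' θ) θ)
    (hode : ∀ θ ∈ Set.Ioo 0 β, HasDerivAt ψ' (-(cβ * Vpot β θ * ψ θ)) θ)
    (hbc : ψ' (β / 2) = 0)
    (γ θ₁ : ℝ) (hγ1 : Real.pi / 2 ≤ γ) (hγ2 : γ ≤ Real.pi)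
    (hθ₁ : θ₁ ∈ Set.Ioc 0 (Real.pi / 2))
    (hcot : Real.cot θ₁ = Real.sin γ) :
    ψ' (Real.pi / 2) / ψ (Real.pi / 2) ≤
      ((2 + Real.cos γ) / (1 + Real.sin γ ^ 2)) * (ψ' θ₁ / ψ θ₁) := by
  obtain ⟨hc0, hc4⟩ := hcβ.mem_Ioc
  have hπ : 0 < π := pi_pos
  set f := fun θ => ψ' θ / ψ θ
  have hf : ∀ x ∈ Ioo 0 β, HasDerivAt f (-(cβ * Vpot β x) - f x ^ 2) x := fun x hx =>
    hasDerivAt_div_of_hasDerivAt_neg_mul (hder x hx) (hode x hx) (hpos x hx).ne'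
  have hcont : ∀ a b, 0 < a → b < β → ContinuousOn f (Icc a b) := fun a b ha hb x hx =>
    (hf x ⟨ha.trans_le hx.1, hx.2.trans_lt hb⟩).continuousAt.continuousWithinAt
  have hsmall : √cβ * (β / 2 - π / 2) ≤ π / 3 := by
    have : √cβ ≤ 1 / 2 := (sqrt_le_left (by norm_num)).2 (by linarith)
    nlinarith [sqrt_nonneg cβ]
  have hf_mid : ∀ x ∈ Ioo (π / 2) (β / 2), HasDerivAt f (-cβ - f x ^ 2) x := by
    intro x hx
    have hV := Vpot_of_mem_Ico (β := β) ⟨hx.1.le, by linarith [hx.2]⟩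
    simpa [hV] using hf x ⟨by linarith [hx.1], by linarith [hx.2]⟩
  have hf_left : ∀ x ∈ Ioo θ₁ (π / 2), HasDerivAt f (-(cβ / sin x ^ 2) - f x ^ 2) x := by
    intro x hx
    have hV := Vpot_of_lt_pi_div_two (β := β) hx.2
    simpa [hV, div_eq_mul_inv] using hf x ⟨hθ₁.1.trans hx.1, by linarith [hx.2]⟩
  have hF : f (π / 2) ≤ π * cβ := by
    have := le_two_mul_of_riccati hc0 (by linarith) (hcont _ _ (by linarith) (by linarith))
      hf_mid (by simp [f, hbc]) hsmall
    nlinarith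
  have hA : f (π / 2) + cβ * sin γ ≤ f θ₁ := by
    have := antitoneOn_sub_mul_cot_of_riccati hθ₁.1 (by linarith)
      (hcont _ _ hθ₁.1 (by linarith)) hf_left ⟨le_rfl, hθ₁.2⟩ ⟨hθ₁.2, le_rfl⟩ hθ₁.2
    simp only [cot_eq_cos_div_sin, cos_pi_div_two, zero_div, mul_zero, sub_zero] at this
    rw [← cot_eq_cos_div_sin, hcot] at this
    linarith
  exact le_two_add_cos_div_mul hc0.le hγ1 hγ2 hF hA

/-- Let `ψ` be the normalized positive solution (extended symmetrically to `(0, β)`) of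
`−ψ'' = c_β·V·ψ` with `ψ'(β/2) = 0` and `ψ(θ)/θ^α → 1` as `θ → 0+`, and
`f = ψ'/ψ`.  For `π/2 ≤ γ ≤ π`, if `θ₁ ∈ (0, π/2]` satisfies `cot θ₁ = sin γ`, then
`((2 + cos γ)/(1 + sin²γ))·f(θ₁) ≥ f(π/2)`. -/
theorem f_theta_one_lower_bound
    (β βcr cβ α : ℝ) (ψ ψ' : ℝ → ℝ)
    (hβ1 : Real.pi ≤ β) (hβ2 : β ≤ 2 * Real.pi)
    (hβcr : isBetaCr βcr) (hcβ : isHardyConst βcr β cβ)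
    (hα : α = (1 + Real.sqrt (1 - 4 * cβ)) / 2)
    (hpos : ∀ θ ∈ Set.Ioo 0 β, 0 < ψ θ)
    (hder : ∀ θ ∈ Set.Ioo 0 β, HasDerivAt ψ (ψ' θ) θ)
    (hode : ∀ θ ∈ Set.Ioo 0 β, HasDerivAt ψ' (-(cβ * Vpot β θ * ψ θ)) θ)
    (hbc : ψ' (β / 2) = 0)
    (hsym : ∀ θ, ψ (β - θ) = ψ θ)
    (hnorm : Filter.Tendsto (fun θ => ψ θ / θ ^ α) (nhdsWithin 0 (Set.Ioi 0)) (nhds 1))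
    (γ θ₁ : ℝ) (hγ1 : Real.pi / 2 ≤ γ) (hγ2 : γ ≤ Real.pi)
    (hθ₁ : θ₁ ∈ Set.Ioc 0 (Real.pi / 2))
    (hcot : Real.cot θ₁ = Real.sin γ) :
    ψ' (Real.pi / 2) / ψ (Real.pi / 2) ≤
      ((2 + Real.cos γ) / (1 + Real.sin γ ^ 2)) * (ψ' θ₁ / ψ θ₁) :=
  f_theta_one_lower_bound_general β βcr cβ ψ ψ' hβ1 hβ2 hcβ hpos hder hode hbc γ θ₁ hγ1 hγ2 hθ₁ hcot
end

section
/- Let π ≤ β ≤ 2π, let ψ be the normalized positive solution with c = c_β, set f(θ) = ψ'(θ)/ψ(θ), and let α = (1+√(1−4c_β))/2. If 0 ≤ ω ≤ π/4, then f(θ)·sin θ·cos(θ+ω) + α·cos ω ≥ 0 for all 0 < θ ≤ π/2. -/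
/-!
With `g = (ψ'/ψ) sin`, the equation `−ψ'' = c V ψ` and `V sin² = 1` on `(0, π/2]` give the
Riccati equation `sin θ · g' = g cos θ − g² − c`, whose right-hand side is negative as soon as
`g ≥ α`, because `α` is the larger root of `g − g² − c`. Hence if `g(θ₀) > α`, then `g ≥ g(θ₀)`
on all of `(0, θ₀]`, so `θ ψ' ≥ g(θ₀) ψ` there and `ψ` grows at least like `θ^{g(θ₀)}`, which is
incompatible with `ψ ~ θ^α`. Thus `0 ≤ g ≤ α` (positivity because `ψ'` decreases to `ψ'(β/2) = 0`),
and the inequality follows from `cos(θ + ω) ≥ −cos ω`.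
-/

open Real Set Filter
open scoped Classical

open Topology

lemma Vpot_nonneg (β θ : ℝ) : 0 ≤ Vpot β θ := by
  unfold Vpot
  split_ifs <;> positivity

lemma Vpot_mul_sin_sq {β θ : ℝ} (hβ : π ≤ β) (hθ : θ ∈ Ioc 0 (π / 2)) :
    Vpot β θ * sin θ ^ 2 = 1 := by
  obtain ⟨h0, h1⟩ := hθ
  rcases h1.lt_or_eq with h1 | rfl
  · have : sin θ ≠ 0 := (sin_pos_of_pos_of_lt_pi h0 (by linarith)).ne'
    rw [Vpot, if_pos h1]
    field_simp
  · rw [Vpot, if_neg (lt_irrefl _)]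
    split_ifs with h
    · simp
    · rw [show β - π / 2 = π / 2 by linarith, sin_pi_div_two]
      norm_num

lemma isHardyConst.mem_Icc {βcr β c : ℝ} (h : isHardyConst βcr β c) : c ∈ Icc 0 (1 / 4) := by
  rcases h with ⟨_, rfl⟩ | ⟨_, hc, _⟩
  · norm_num
  · exact Ioc_subset_Icc_self hc

lemma one_add_sqrt_div_two_mul_one_sub {c : ℝ} (hc : c ≤ 1 / 4) :
    (1 + √(1 - 4 * c)) / 2 * (1 - (1 + √(1 - 4 * c)) / 2) = c := by
  nlinarith [sq_sqrt (show 0 ≤ 1 - 4 * c by linarith)]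

lemma riccati_rhs_neg {α c g x : ℝ} (hα : 1 / 2 ≤ α) (hc : α * (1 - α) = c) (hx : x < 1)
    (hg : α ≤ g) : g * x - g ^ 2 - c < 0 := by
  nlinarith [mul_nonneg (sub_nonneg.2 hg) (show 0 ≤ g - (1 - α) by linarith)]

lemma hasDerivAt_logDeriv_mul_sin {ψ ψ' : ℝ → ℝ} {c v θ : ℝ} (hψ : 0 < ψ θ) (hsin : 0 < sin θ)
    (hder : HasDerivAt ψ (ψ' θ) θ) (hode : HasDerivAt ψ' (-(c * v * ψ θ)) θ)
    (hv : v * sin θ ^ 2 = 1) :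
    HasDerivAt (fun t => ψ' t / ψ t * sin t)
      ((ψ' θ / ψ θ * sin θ * cos θ - (ψ' θ / ψ θ * sin θ) ^ 2 - c) / sin θ) θ := by
  refine ((hode.div hder hψ.ne').mul (hasDerivAt_sin θ)).congr_deriv ?_
  simp only [Pi.div_apply]
  field_simp
  linear_combination (-(c * ψ θ ^ 2)) * hv

lemma le_level_of_hasDerivAt_neg_at_level {g g' : ℝ → ℝ} {a b α : ℝ} (hab : a ≤ b)
    (hd : ∀ x ∈ Icc a b, HasDerivAt g (g' x) x) (hneg : ∀ x ∈ Ico a b, g x = α → g' x < 0)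
    (ha : g a ≤ α) : g b ≤ α :=
  image_le_of_deriv_right_lt_deriv_boundary (fun x hx => (hd x hx).continuousAt.continuousWithinAt)
    (fun x hx => (hd x (Ico_subset_Icc_self hx)).hasDerivWithinAt) ha
    (fun _ => hasDerivAt_const _ α) hneg ⟨hab, le_rfl⟩

lemma le_of_hasDerivAt_neg_above_level {g g' : ℝ → ℝ} {a b α : ℝ}
    (hd : ∀ x ∈ Ioc a b, HasDerivAt g (g' x) x) (hneg : ∀ x ∈ Ioc a b, α ≤ g x → g' x < 0)
    (hb : α < g b) : ∀ x ∈ Ioc a b, g b ≤ g x := by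
  intro x hx
  have hsub : Icc x b ⊆ Ioc a b := fun y hy => ⟨hx.1.trans_le hy.1, hy.2⟩
  -- `g` cannot cross the level `α` upwards, so `g y ≤ α` would force `g b ≤ α`
  have habove : ∀ y ∈ Icc x b, α < g y := by
    intro y hy
    by_contra! hy'
    refine hb.not_ge (le_level_of_hasDerivAt_neg_at_level hy.2 (fun z hz => hd z (hsub ?_))
      (fun z hz hz' => hneg z (hsub ?_) hz'.ge) hy')
    · exact ⟨hy.1.trans hz.1, hz.2⟩
    · exact ⟨hy.1.trans hz.1, hz.2.le⟩
  have hanti : AntitoneOn g (Icc x b) :=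
    antitoneOn_of_hasDerivWithinAt_nonpos (convex_Icc x b)
      (fun y hy => (hd y (hsub hy)).continuousAt.continuousWithinAt)
      (fun y hy => (hd y (hsub (interior_subset hy))).hasDerivWithinAt)
      (fun y hy => (hneg y (hsub (interior_subset hy)) (habove y (interior_subset hy)).le).le)
  exact hanti ⟨le_rfl, hx.2⟩ ⟨hx.2, le_rfl⟩ hx.2

lemma monotoneOn_mul_rpow_neg {ψ ψ' : ℝ → ℝ} {m b : ℝ}
    (hd : ∀ x ∈ Ioc 0 b, HasDerivAt ψ (ψ' x) x) (h : ∀ x ∈ Ioc 0 b, m * ψ x ≤ x * ψ' x) :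
    MonotoneOn (fun x => ψ x * x ^ (-m)) (Ioc 0 b) := by
  have hd' : ∀ x ∈ Ioc 0 b, HasDerivAt (fun x => ψ x * x ^ (-m))
      (ψ' x * x ^ (-m) + ψ x * (-m * x ^ (-m - 1))) x := fun x hx =>
    (hd x hx).mul (hasDerivAt_rpow_const (Or.inl hx.1.ne'))
  refine monotoneOn_of_hasDerivWithinAt_nonneg (convex_Ioc 0 b)
    (fun x hx => (hd' x hx).continuousAt.continuousWithinAt)
    (fun x hx => (hd' x (interior_subset hx)).hasDerivWithinAt) fun x hx => ?_
  rw [interior_Ioc] at hx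
  have hx0 := hx.1
  have key : ψ' x * x ^ (-m) + ψ x * (-m * x ^ (-m - 1)) =
      x ^ (-m - 1) * (x * ψ' x - m * ψ x) := by
    rw [rpow_sub_one hx0.ne']
    field_simp
    ring
  rw [key]
  exact mul_nonneg (rpow_pos_of_pos hx0 _).le (sub_nonneg.2 (h x ⟨hx0, hx.2.le⟩))

lemma not_tendsto_div_rpow_one {ψ : ℝ → ℝ} {α m C : ℝ} (hm : α < m)
    (hψ : ∀ᶠ x in 𝓝[>] 0, ψ x ≤ C * x ^ m) :
    ¬ Tendsto (fun x => ψ x / x ^ α) (𝓝[>] 0) (𝓝 1) := by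
  intro h
  have hlim : Tendsto (fun x : ℝ => C * x ^ (m - α)) (𝓝[>] 0) (𝓝 0) := by
    have := (continuousAt_rpow_const 0 (m - α) (Or.inr (by linarith))).tendsto.const_mul C
    simpa [zero_rpow (sub_pos.2 hm).ne'] using this.mono_left nhdsWithin_le_nhds
  have : (1 : ℝ) ≤ 0 := le_of_tendsto_of_tendsto h hlim <| by
    filter_upwards [hψ, self_mem_nhdsWithin] with x hx (hx0 : 0 < x)
    rw [rpow_sub hx0, ← mul_div_assoc]
    exact div_le_div_of_nonneg_right hx (rpow_pos_of_pos hx0 α).le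
  norm_num at this

lemma ode_deriv_nonneg_of_deriv_half_eq_zero {β c : ℝ} {ψ ψ' : ℝ → ℝ} (hc : 0 ≤ c)
    (hpos : ∀ θ ∈ Ioo 0 β, 0 < ψ θ)
    (hode : ∀ θ ∈ Ioo 0 β, HasDerivAt ψ' (-(c * Vpot β θ * ψ θ)) θ)
    (hbc : ψ' (β / 2) = 0) : ∀ θ ∈ Ioc 0 (β / 2), 0 ≤ ψ' θ := by
  intro θ hθ
  have hanti : AntitoneOn ψ' (Ioo 0 β) := by
    refine antitoneOn_of_hasDerivWithinAt_nonpos (f' := fun x => -(c * Vpot β x * ψ x))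
      (convex_Ioo 0 β)
      (fun x hx => (hode x hx).continuousAt.continuousWithinAt) ?_ ?_ <;> rw [interior_Ioo]
    · exact fun x hx => (hode x hx).hasDerivWithinAt
    · exact fun x hx => neg_nonpos.2 <|
        mul_nonneg (mul_nonneg hc (Vpot_nonneg β x)) (hpos x hx).le
  have hβ : 0 < β := by linarith [hθ.1, hθ.2]
  exact hbc ▸ hanti ⟨hθ.1, by linarith [hθ.2]⟩ ⟨half_pos hβ, half_lt_self hβ⟩ hθ.2

lemma logDeriv_mul_sin_le {β c α : ℝ} {ψ ψ' : ℝ → ℝ} (hβ : π ≤ β) (hα : 1 / 2 ≤ α)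
    (hαc : α * (1 - α) = c) (hpos : ∀ θ ∈ Ioo 0 β, 0 < ψ θ)
    (hder : ∀ θ ∈ Ioo 0 β, HasDerivAt ψ (ψ' θ) θ)
    (hode : ∀ θ ∈ Ioo 0 β, HasDerivAt ψ' (-(c * Vpot β θ * ψ θ)) θ)
    (hnorm : Tendsto (fun θ => ψ θ / θ ^ α) (𝓝[>] 0) (𝓝 1)) :
    ∀ θ ∈ Ioc 0 (π / 2), ψ' θ / ψ θ * sin θ ≤ α := by
  intro θ₀ hθ₀
  by_contra! hgt
  set g : ℝ → ℝ := fun t => ψ' t / ψ t * sin t with hg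
  have hle : Ioc 0 θ₀ ⊆ Ioc 0 (π / 2) := fun x hx => ⟨hx.1, hx.2.trans hθ₀.2⟩
  have hsub : Ioc 0 θ₀ ⊆ Ioo 0 β := fun x hx => ⟨hx.1, by linarith [(hle hx).2, pi_pos]⟩
  have hsin : ∀ x ∈ Ioc 0 θ₀, 0 < sin x := fun x hx =>
    sin_pos_of_pos_of_lt_pi hx.1 (by linarith [(hle hx).2, pi_pos])
  have hge : ∀ x ∈ Ioc 0 θ₀, g θ₀ ≤ g x := by
    refine le_of_hasDerivAt_neg_above_level
      (fun x hx => hasDerivAt_logDeriv_mul_sin (hpos x (hsub hx)) (hsin x hx) (hder x (hsub hx))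
        (hode x (hsub hx)) (Vpot_mul_sin_sq hβ (hle hx)))
      (fun x hx hgx => div_neg_of_neg_of_pos ?_ (hsin x hx)) hgt
    have hcos : cos x < 1 := by
      simpa using cos_lt_cos_of_nonneg_of_le_pi le_rfl (by linarith [(hle hx).2, pi_pos]) hx.1
    exact riccati_rhs_neg hα hαc hcos hgx
  have hpow : ∀ x ∈ Ioc 0 θ₀, g θ₀ * ψ x ≤ x * ψ' x := by
    intro x hx
    have hψ := hpos x (hsub hx)
    have h1 : g θ₀ * ψ x ≤ ψ' x * sin x := by
      calc g θ₀ * ψ x ≤ g x * ψ x := mul_le_mul_of_nonneg_right (hge x hx) hψ.le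
        _ = ψ' x * sin x := by simp only [hg]; field_simp
    have hψ' : 0 < ψ' x :=
      pos_of_mul_pos_left (lt_of_lt_of_le (by nlinarith) h1) (hsin x hx).le
    calc g θ₀ * ψ x ≤ ψ' x * sin x := h1
      _ ≤ ψ' x * x := mul_le_mul_of_nonneg_left (sin_le hx.1.le) hψ'.le
      _ = x * ψ' x := mul_comm _ _
  have hmono := monotoneOn_mul_rpow_neg (fun x hx => hder x (hsub hx)) hpow
  refine not_tendsto_div_rpow_one (C := ψ θ₀ * θ₀ ^ (-g θ₀)) hgt ?_ hnorm
  filter_upwards [Ioc_mem_nhdsGT hθ₀.1] with x hx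
  have := hmono hx ⟨hθ₀.1, le_rfl⟩ hx.2
  simp only at this
  rw [rpow_neg hx.1.le, ← div_eq_mul_inv, div_le_iff₀ (rpow_pos_of_pos hx.1 _)] at this
  exact this

lemma neg_cos_le_cos_add {θ ω : ℝ} (hθ : 0 ≤ θ) (hω : 0 ≤ ω) (h : θ + 2 * ω ≤ π) :
    -cos ω ≤ cos (θ + ω) := by
  rw [← cos_pi_sub]
  exact cos_le_cos_of_nonneg_of_le_pi (by linarith) (by linarith) (by linarith)

lemma mul_cos_add_add_mul_cos_nonneg {g α θ ω : ℝ} (hg : 0 ≤ g) (hgα : g ≤ α) (hθ : 0 ≤ θ)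
    (hω : 0 ≤ ω) (h : θ + 2 * ω ≤ π) : 0 ≤ g * cos (θ + ω) + α * cos ω := by
  have hcos : 0 ≤ cos ω := cos_nonneg_of_mem_Icc ⟨by linarith [pi_pos], by linarith⟩
  calc 0 ≤ (α - g) * cos ω := mul_nonneg (sub_nonneg.2 hgα) hcos
    _ = g * -cos ω + α * cos ω := by ring
    _ ≤ g * cos (θ + ω) + α * cos ω := by
      gcongr
      exact neg_cos_le_cos_add hθ hω h

theorem f_sin_cos_inequality_general
    (β βcr cβ α : ℝ) (ψ ψ' : ℝ → ℝ)
    (hβ1 : Real.pi ≤ β)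
    (hcβ : isHardyConst βcr β cβ)
    (hα : α = (1 + Real.sqrt (1 - 4 * cβ)) / 2)
    (hpos : ∀ θ ∈ Set.Ioo 0 β, 0 < ψ θ)
    (hder : ∀ θ ∈ Set.Ioo 0 β, HasDerivAt ψ (ψ' θ) θ)
    (hode : ∀ θ ∈ Set.Ioo 0 β, HasDerivAt ψ' (-(cβ * Vpot β θ * ψ θ)) θ)
    (hbc : ψ' (β / 2) = 0)
    (hnorm : Filter.Tendsto (fun θ => ψ θ / θ ^ α) (nhdsWithin 0 (Set.Ioi 0)) (nhds 1))
    (ω : ℝ) (hω1 : 0 ≤ ω) (hω2 : ω ≤ Real.pi / 4) :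
    ∀ θ : ℝ, 0 < θ → θ ≤ Real.pi / 2 →
      0 ≤ (ψ' θ / ψ θ) * Real.sin θ * Real.cos (θ + ω) + α * Real.cos ω := by
  intro θ hθ0 hθ1
  obtain ⟨hc0, hc4⟩ := hcβ.mem_Icc
  have hα2 : 1 / 2 ≤ α := by rw [hα]; linarith [sqrt_nonneg (1 - 4 * cβ)]
  have hαc : α * (1 - α) = cβ := hα ▸ one_add_sqrt_div_two_mul_one_sub hc4
  have hψ : 0 < ψ θ := hpos θ ⟨hθ0, by linarith [pi_pos]⟩
  have hψ' : 0 ≤ ψ' θ := ode_deriv_nonneg_of_deriv_half_eq_zero hc0 hpos hode hbc θ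
    ⟨hθ0, by linarith⟩
  have hsin : 0 ≤ sin θ := sin_nonneg_of_nonneg_of_le_pi hθ0.le (by linarith [pi_pos])
  exact mul_cos_add_add_mul_cos_nonneg (mul_nonneg (div_nonneg hψ' hψ.le) hsin)
    (logDeriv_mul_sin_le hβ1 hα2 hαc hpos hder hode hnorm θ ⟨hθ0, hθ1⟩) hθ0.le hω1 (by linarith)

/-- Let `ψ` be the normalized positive solution (extended symmetrically to `(0, β)`) of
`−ψ'' = c_β·V·ψ` with `ψ'(β/2) = 0` and `ψ(θ)/θ^α → 1` as `θ → 0+`, with `f = ψ'/ψ`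
and `α = (1+√(1−4c_β))/2`.  If `0 ≤ ω ≤ π/4`, then
`f(θ)·sin θ·cos(θ+ω) + α·cos ω ≥ 0` for all `0 < θ ≤ π/2`. -/
theorem f_sin_cos_inequality
    (β βcr cβ α : ℝ) (ψ ψ' : ℝ → ℝ)
    (hβ1 : Real.pi ≤ β) (hβ2 : β ≤ 2 * Real.pi)
    (hβcr : isBetaCr βcr) (hcβ : isHardyConst βcr β cβ)
    (hα : α = (1 + Real.sqrt (1 - 4 * cβ)) / 2)
    (hpos : ∀ θ ∈ Set.Ioo 0 β, 0 < ψ θ)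
    (hder : ∀ θ ∈ Set.Ioo 0 β, HasDerivAt ψ (ψ' θ) θ)
    (hode : ∀ θ ∈ Set.Ioo 0 β, HasDerivAt ψ' (-(cβ * Vpot β θ * ψ θ)) θ)
    (hbc : ψ' (β / 2) = 0)
    (hsym : ∀ θ, ψ (β - θ) = ψ θ)
    (hnorm : Filter.Tendsto (fun θ => ψ θ / θ ^ α) (nhdsWithin 0 (Set.Ioi 0)) (nhds 1))
    (ω : ℝ) (hω1 : 0 ≤ ω) (hω2 : ω ≤ Real.pi / 4) :
    ∀ θ : ℝ, 0 < θ → θ ≤ Real.pi / 2 →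
      0 ≤ (ψ' θ / ψ θ) * Real.sin θ * Real.cos (θ + ω) + α * Real.cos ω :=
  f_sin_cos_inequality_general β βcr cβ α ψ ψ' hβ1 hcβ hα hpos hder hode hbc hnorm ω hω1 hω2
end

section
/- Let π ≤ β ≤ 2π, let c ∈ (0, 1/4], and let α = (1+√(1−4c))/2 be the largest root of α(1−α) = c. If 3π/2 − β ≤ ω ≤ 2π − β, then for all θ with π/2 ≤ θ ≤ β − π/2 one has √c·tan(√c·(β/2 − θ))·cos(θ+ω) + α·(1 + sin(θ+ω)) ≥ 0. -/
/-!
Write `s = √c ≤ 1/2`, `t = β/2 − θ ∈ [−π/2, π/2]` and `φ = θ + ω`. If `t ≤ 0`, then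
`φ ∈ [π/2, 3π/2]`, so both summands are nonnegative, and likewise if `t ≥ 0` and `cos φ ≥ 0`.
If `t ≥ 0` and `cos φ < 0`, put `x = 3π/2 − φ ∈ [t, π)`; the claim becomes
`s·tan(s t)·sin x ≤ α(1 − cos x)`. Convexity of `tan` on `[0, π/2)` gives
`tan(s t) ≤ tan(s x) ≤ 2s·tan(x/2)`, and `tan(x/2)·sin x = 1 − cos x`, so the left side is at
most `2c(1 − cos x)`; finally `2c = 2α(1 − α) ≤ α` because `α ≥ 1/2`.
-/

open Real Set

namespace Real

theorem convexOn_tan_Ico : ConvexOn ℝ (Ico 0 (π / 2)) tan := by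
  have hpi := pi_pos
  apply MonotoneOn.convexOn_of_deriv (convex_Ico 0 (π / 2))
  · exact continuousOn_tan_Ioo.mono fun x hx => ⟨by linarith [hx.1], hx.2⟩
  · intro x hx
    rw [interior_Ico] at hx
    exact (hasDerivAt_tan (cos_pos_of_mem_Ioo ⟨by linarith [hx.1], hx.2⟩).ne').differentiableAt
      |>.differentiableWithinAt
  · rw [interior_Ico]
    intro x hx y hy hxy
    have hcy : 0 < cos y := cos_pos_of_mem_Ioo ⟨by linarith [hy.1], hy.2⟩
    have hcos : cos y ≤ cos x := cos_le_cos_of_nonneg_of_le_pi hx.1.le (by linarith [hy.2]) hxy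
    simp only [deriv_tan]
    gcongr

theorem tan_mul_le_mul_tan {l y : ℝ} (hl0 : 0 ≤ l) (hl1 : l ≤ 1) (hy0 : 0 ≤ y)
    (hy : y < π / 2) : tan (l * y) ≤ l * tan y := by
  have h0 : (0 : ℝ) ∈ Ico 0 (π / 2) := ⟨le_rfl, by linarith [pi_pos]⟩
  have := convexOn_tan_Ico.2 ⟨hy0, hy⟩ h0 hl0 (sub_nonneg.2 hl1) (by ring)
  simpa using this

theorem tan_half_mul_sin {x : ℝ} (hx : cos (x / 2) ≠ 0) : tan (x / 2) * sin x = 1 - cos x := by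
  have hsin : sin x = 2 * sin (x / 2) * cos (x / 2) := by
    rw [← sin_two_mul]; ring_nf
  have hcos : cos x = 1 - 2 * sin (x / 2) ^ 2 := by
    rw [← cos_two_mul_eq_one_sub]; ring_nf
  rw [tan_eq_sin_div_cos, hsin, hcos]
  field_simp
  ring

end Real

theorem two_mul_le_one_add_sqrt_one_sub_four_mul_div_two {c : ℝ} (hc : c ≤ 1 / 4) :
    2 * c ≤ (1 + √(1 - 4 * c)) / 2 := by
  have hr := sq_sqrt (show 0 ≤ 1 - 4 * c by linarith)
  nlinarith [sqrt_nonneg (1 - 4 * c)]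

theorem mul_tan_mul_mul_sin_le {s t x : ℝ} (hs0 : 0 ≤ s) (hs : s ≤ 1 / 2) (ht : 0 ≤ t)
    (htx : t ≤ x) (hx : x < π) : s * tan (s * t) * sin x ≤ 2 * s ^ 2 * (1 - cos x) := by
  have hsx : s * x < π / 2 := by nlinarith
  have hmono : tan (s * t) ≤ tan (s * x) :=
    strictMonoOn_tan.monotoneOn ⟨by nlinarith [pi_pos], by nlinarith⟩ ⟨by nlinarith [pi_pos], hsx⟩
      (mul_le_mul_of_nonneg_left htx hs0)
  have hconv : tan (s * x) ≤ 2 * s * tan (x / 2) := by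
    have := tan_mul_le_mul_tan (l := 2 * s) (y := x / 2) (by linarith) (by linarith)
      (by linarith) (by linarith)
    rwa [show 2 * s * (x / 2) = s * x by ring] at this
  have hsin : 0 ≤ sin x := sin_nonneg_of_nonneg_of_le_pi (ht.trans htx) hx.le
  have hhalf : tan (x / 2) * sin x = 1 - cos x :=
    tan_half_mul_sin (cos_pos_of_mem_Ioo ⟨by linarith [pi_pos], by linarith⟩).ne'
  calc s * tan (s * t) * sin x ≤ s * (2 * s * tan (x / 2)) * sin x := by
        gcongr; exact hmono.trans hconv
    _ = 2 * s ^ 2 * (tan (x / 2) * sin x) := by ring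
    _ = 2 * s ^ 2 * (1 - cos x) := by rw [hhalf]

theorem tan_cos_inequality_of_nonpos {s t φ a : ℝ} (hs0 : 0 ≤ s) (hs : s ≤ 1) (ht : t ≤ 0)
    (ht' : -(π / 2) ≤ t) (hφ : π / 2 ≤ φ) (hφ' : φ ≤ π + π / 2) (ha : 0 ≤ a) :
    0 ≤ s * tan (s * t) * cos φ + a * (1 + sin φ) := by
  have htan : tan (s * t) ≤ 0 :=
    tan_nonpos_of_nonpos_of_neg_pi_div_two_le (mul_nonpos_of_nonneg_of_nonpos hs0 ht)
      (by nlinarith)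
  have hcos : cos φ ≤ 0 := cos_nonpos_of_pi_div_two_le_of_le hφ hφ'
  exact add_nonneg
    (mul_nonneg_of_nonpos_of_nonpos (mul_nonpos_of_nonneg_of_nonpos hs0 htan) hcos)
    (mul_nonneg ha (by linarith [neg_one_le_sin φ]))

theorem tan_cos_inequality_of_nonneg {s t φ a : ℝ} (hs0 : 0 ≤ s) (hs : s ≤ 1 / 2)
    (ha : 2 * s ^ 2 ≤ a) (ht : 0 ≤ t) (ht' : t ≤ π) (hφ : -(π / 2) ≤ φ)
    (hφt : φ + t ≤ π + π / 2) :
    0 ≤ s * tan (s * t) * cos φ + a * (1 + sin φ) := by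
  rcases le_or_gt 0 (cos φ) with hcos | hcos
  · have htan : 0 ≤ tan (s * t) :=
      tan_nonneg_of_nonneg_of_le_pi_div_two (mul_nonneg hs0 ht) (by nlinarith)
    have ha0 : 0 ≤ a := by linarith [sq_nonneg s]
    exact add_nonneg (mul_nonneg (mul_nonneg hs0 htan) hcos)
      (mul_nonneg ha0 (by linarith [neg_one_le_sin φ]))
  · have hφ' : π / 2 < φ := by
      by_contra! h
      exact hcos.not_ge (cos_nonneg_of_neg_pi_div_two_le_of_le hφ h)
    obtain ⟨x, rfl⟩ : ∃ x, φ = π + (π / 2 - x) := ⟨π + π / 2 - φ, by ring⟩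
    simp only [cos_add, sin_add, cos_pi, sin_pi, cos_pi_div_two_sub, sin_pi_div_two_sub]
    have key := mul_tan_mul_mul_sin_le (x := x) hs0 hs ht (by linarith) (by linarith)
    have hcoef := mul_le_mul_of_nonneg_right ha (sub_nonneg.2 (cos_le_one x))
    linarith

theorem tan_cos_inequality_plus_general
    (β c α ω : ℝ)
    (hβ2 : β ≤ 2 * Real.pi)
    (hc : c ∈ Set.Ioc (0 : ℝ) (1 / 4))
    (hα : α = (1 + Real.sqrt (1 - 4 * c)) / 2)
    (hω1 : 3 * Real.pi / 2 - β ≤ ω) (hω2 : ω ≤ 2 * Real.pi - β) :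
    ∀ θ : ℝ, Real.pi / 2 ≤ θ → θ ≤ β - Real.pi / 2 →
      0 ≤ Real.sqrt c * Real.tan (Real.sqrt c * (β / 2 - θ)) * Real.cos (θ + ω) +
        α * (1 + Real.sin (θ + ω)) := by
  intro θ hθ1 hθ2
  obtain ⟨hc0, hc4⟩ := hc
  have hs : √c ≤ 1 / 2 := (sqrt_le_left (by norm_num)).2 (by linarith)
  have hα2c : 2 * √c ^ 2 ≤ α := by
    rw [sq_sqrt hc0.le, hα]
    exact two_mul_le_one_add_sqrt_one_sub_four_mul_div_two hc4
  rcases le_total (β / 2 - θ) 0 with ht | ht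
  · exact tan_cos_inequality_of_nonpos (sqrt_nonneg c) (by linarith) ht (by linarith)
      (by linarith) (by linarith) ((by positivity : (0 : ℝ) ≤ 2 * √c ^ 2).trans hα2c)
  · exact tan_cos_inequality_of_nonneg (sqrt_nonneg c) hs hα2c ht (by linarith [pi_pos])
      (by linarith) (by linarith)

/-- For `π ≤ β ≤ 2π`, `c ∈ (0, 1/4]`, `α = (1+√(1−4c))/2` the largest root of
`α(1−α) = c`, and `3π/2 − β ≤ ω ≤ 2π − β`, one has
`√c·tan(√c·(β/2 − θ))·cos(θ+ω) + α·(1 + sin(θ+ω)) ≥ 0` for `π/2 ≤ θ ≤ β − π/2`. -/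
theorem tan_cos_inequality_plus
    (β c α ω : ℝ)
    (hβ1 : Real.pi ≤ β) (hβ2 : β ≤ 2 * Real.pi)
    (hc : c ∈ Set.Ioc (0 : ℝ) (1 / 4))
    (hα : α = (1 + Real.sqrt (1 - 4 * c)) / 2)
    (hω1 : 3 * Real.pi / 2 - β ≤ ω) (hω2 : ω ≤ 2 * Real.pi - β) :
    ∀ θ : ℝ, Real.pi / 2 ≤ θ → θ ≤ β - Real.pi / 2 →
      0 ≤ Real.sqrt c * Real.tan (Real.sqrt c * (β / 2 - θ)) * Real.cos (θ + ω) +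
        α * (1 + Real.sin (θ + ω)) :=
  tan_cos_inequality_plus_general β c α ω hβ2 hc hα hω1 hω2
end

section
/- Let π ≤ β ≤ 2π, let c ∈ (0, 1/4], and let α = (1+√(1−4c))/2 be the largest root of α(1−α) = c. If 0 ≤ ω ≤ 2π − β, then for all θ with π/2 ≤ θ ≤ β − π/2 one has −√c·tan(√c·(β/2 − θ))·cos(θ+ω) + α·(1 − sin(θ+ω)) ≥ 0. -/
open Real Set

/-!
Put `φ = θ + ω ∈ [π/2, 3π/2]`, so `cos φ ≤ 0 ≤ 1 - sin φ`. For `θ ≤ β/2` both terms are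
nonnegative. For `θ > β/2` write `x = θ - β/2` and `u = φ - π/2`, so that `0 < x ≤ u ≤ π`;
the claim becomes `√c · tan(√c·x) · sin u ≤ α (1 - cos u)`. Since `√c ≤ 1/2 ≤ α` and `tan` is
increasing, `√c · tan(√c·x) ≤ α tan(x/2)`, and `tan(x/2) sin u ≤ tan(u/2) sin u = 1 - cos u`.
-/

theorem tan_mul_sin_two_mul_le_one_sub_cos_two_mul {a b : ℝ} (ha : 0 ≤ a) (haπ : a < π / 2)
    (hab : a ≤ b) (hb : b ≤ π) :
    tan a * sin (2 * b) ≤ 1 - cos (2 * b) := by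
  have hcos : 0 < cos a := cos_pos_of_mem_Ioo ⟨by linarith, haπ⟩
  have hsin : 0 ≤ sin b := sin_nonneg_of_nonneg_of_le_pi (by linarith) hb
  have hsub : 0 ≤ sin b * cos a - cos b * sin a := by
    rw [← sin_sub]
    exact sin_nonneg_of_nonneg_of_le_pi (by linarith) (by linarith)
  have hfactor : (1 - cos (2 * b)) * cos a - sin a * sin (2 * b)
      = 2 * sin b * (sin b * cos a - cos b * sin a) := by
    rw [cos_two_mul, sin_two_mul]
    linear_combination (-2 * cos a) * sin_sq_add_cos_sq b
  rw [tan_eq_sin_div_cos, div_mul_eq_mul_div, div_le_iff₀ hcos]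
  linarith [mul_nonneg (mul_nonneg zero_le_two hsin) hsub]

theorem mul_tan_mul_le_mul_tan_half {s α x : ℝ} (hs0 : 0 ≤ s) (hs : s ≤ 1 / 2) (hsα : s ≤ α)
    (hx0 : 0 ≤ x) (hx : x < π) :
    s * tan (s * x) ≤ α * tan (x / 2) := by
  have hsx : s * x ≤ x / 2 := by nlinarith
  have htan : tan (s * x) ≤ tan (x / 2) :=
    strictMonoOn_tan.monotoneOn ⟨by nlinarith [pi_pos], by linarith⟩
      ⟨by linarith [pi_pos], by linarith⟩ hsx
  exact mul_le_mul hsα htan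
    (tan_nonneg_of_nonneg_of_le_pi_div_two (mul_nonneg hs0 hx0) (by linarith)) (hs0.trans hsα)

theorem mul_tan_mul_mul_sin_le_mul_one_sub_cos {s α x u : ℝ} (hs0 : 0 ≤ s) (hs : s ≤ 1 / 2)
    (hsα : s ≤ α) (hx0 : 0 ≤ x) (hx : x < π) (hxu : x ≤ u) (hu : u ≤ π) :
    s * tan (s * x) * sin u ≤ α * (1 - cos u) := by
  have hhalf := tan_mul_sin_two_mul_le_one_sub_cos_two_mul (a := x / 2) (b := u / 2)
    (by linarith) (by linarith) (by linarith) (by linarith [pi_pos])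
  rw [mul_div_cancel₀ u two_ne_zero] at hhalf
  calc s * tan (s * x) * sin u
      ≤ α * tan (x / 2) * sin u :=
        mul_le_mul_of_nonneg_right (mul_tan_mul_le_mul_tan_half hs0 hs hsα hx0 hx)
          (sin_nonneg_of_nonneg_of_le_pi (by linarith) hu)
    _ = α * (tan (x / 2) * sin u) := mul_assoc _ _ _
    _ ≤ α * (1 - cos u) := mul_le_mul_of_nonneg_left hhalf (hs0.trans hsα)

theorem tan_cos_inequality_minus_general
    (β c α ω : ℝ)
    (hβ1 : Real.pi ≤ β)
    (hc : c ∈ Set.Ioc (0 : ℝ) (1 / 4))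
    (hα : α = (1 + Real.sqrt (1 - 4 * c)) / 2)
    (hω1 : 0 ≤ ω) (hω2 : ω ≤ 2 * Real.pi - β) :
    ∀ θ : ℝ, Real.pi / 2 ≤ θ → θ ≤ β - Real.pi / 2 →
      0 ≤ -(Real.sqrt c * Real.tan (Real.sqrt c * (β / 2 - θ))) * Real.cos (θ + ω) +
        α * (1 - Real.sin (θ + ω)) := by
  intro θ hθ1 hθ2
  have hs0 : 0 ≤ √c := sqrt_nonneg c
  have hs : √c ≤ 1 / 2 := sqrt_le_iff.2 ⟨by norm_num, by linarith [hc.2]⟩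
  have hα0 : 1 / 2 ≤ α := by rw [hα]; linarith [sqrt_nonneg (1 - 4 * c)]
  have hsin : 0 ≤ 1 - sin (θ + ω) := sub_nonneg.2 (sin_le_one _)
  by_cases hθ : θ ≤ β / 2
  · have htan : 0 ≤ tan (√c * (β / 2 - θ)) :=
      tan_nonneg_of_nonneg_of_le_pi_div_two (by nlinarith) (by nlinarith)
    have hcos : cos (θ + ω) ≤ 0 := cos_nonpos_of_pi_div_two_le_of_le (by linarith) (by linarith)
    exact add_nonneg (mul_nonneg_of_nonpos_of_nonpos (neg_nonpos.2 (mul_nonneg hs0 htan)) hcos)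
      (mul_nonneg (by linarith) hsin)
  · have key := mul_tan_mul_mul_sin_le_mul_one_sub_cos (α := α) (x := θ - β / 2)
      (u := θ + ω - π / 2) hs0 hs (by linarith) (by linarith) (by linarith) (by linarith)
      (by linarith)
    have hcos_shift : cos (θ + ω) = -sin (θ + ω - π / 2) := by
      rw [← cos_add_pi_div_two, sub_add_cancel]
    have hsin_shift : sin (θ + ω) = cos (θ + ω - π / 2) := by
      rw [← sin_add_pi_div_two, sub_add_cancel]
    have htan_neg : tan (√c * (β / 2 - θ)) = -tan (√c * (θ - β / 2)) := by
      rw [← tan_neg]; ring_nf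
    rw [hcos_shift, hsin_shift, htan_neg]
    linarith

/-- For `π ≤ β ≤ 2π`, `c ∈ (0, 1/4]`, `α = (1+√(1−4c))/2` the largest root of
`α(1−α) = c`, and `0 ≤ ω ≤ 2π − β`, one has
`−√c·tan(√c·(β/2 − θ))·cos(θ+ω) + α·(1 − sin(θ+ω)) ≥ 0` for `π/2 ≤ θ ≤ β − π/2`. -/
theorem tan_cos_inequality_minus
    (β c α ω : ℝ)
    (hβ1 : Real.pi ≤ β) (hβ2 : β ≤ 2 * Real.pi)
    (hc : c ∈ Set.Ioc (0 : ℝ) (1 / 4))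
    (hα : α = (1 + Real.sqrt (1 - 4 * c)) / 2)
    (hω1 : 0 ≤ ω) (hω2 : ω ≤ 2 * Real.pi - β) :
    ∀ θ : ℝ, Real.pi / 2 ≤ θ → θ ≤ β - Real.pi / 2 →
      0 ≤ -(Real.sqrt c * Real.tan (Real.sqrt c * (β / 2 - θ))) * Real.cos (θ + ω) +
        α * (1 - Real.sin (θ + ω)) :=
  tan_cos_inequality_minus_general β c α ω hβ1 hc hα hω1 hω2
end

section
/- Let π/2 ≤ γ ≤ π. For each θ ∈ (0, π/2], let θ₁ ∈ (0, π/2] be the unique angle satisfying cot θ₁ = −cos γ·cot θ + sin γ. Then θ₁ ≥ θ + γ − π. -/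
open Real Set

/-! With `φ := θ + γ - π`, the cotangent relation reads `cot θ₁ = cos φ / sin θ`. When `φ > 0`,
`φ ∈ (0, θ]` gives `0 < sin φ ≤ sin θ`, hence `cot θ₁ ≤ cot φ`, and `θ₁ ≥ φ` follows because
`cot` is decreasing on `(0, π)`. -/

namespace Real

theorem strictAntiOn_cot : StrictAntiOn cot (Ioo 0 π) := by
  intro x ⟨hx0, hxπ⟩ y ⟨hy0, hyπ⟩ hxy
  have hsx : 0 < sin x := sin_pos_of_pos_of_lt_pi hx0 hxπ
  have hsy : 0 < sin y := sin_pos_of_pos_of_lt_pi hy0 hyπ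
  have hsub : 0 < sin (y - x) := sin_pos_of_pos_of_lt_pi (by linarith) (by linarith)
  rw [cot_eq_cos_div_sin, cot_eq_cos_div_sin, div_lt_div_iff₀ hsy hsx]
  rw [sin_sub] at hsub
  linarith

theorem cos_add_sub_pi (θ γ : ℝ) : cos (θ + γ - π) = -cos γ * cos θ + sin γ * sin θ := by
  rw [cos_sub_pi, cos_add]
  ring

theorem cos_div_sin_le_cot {φ θ : ℝ} (hφ0 : 0 < φ) (hφθ : φ ≤ θ) (hθ : θ ≤ π / 2) :
    cos φ / sin θ ≤ cot φ := by
  have hsφ : 0 < sin φ := sin_pos_of_pos_of_lt_pi hφ0 (by linarith [pi_pos])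
  have hcφ : 0 ≤ cos φ := cos_nonneg_of_mem_Icc ⟨by linarith, by linarith⟩
  have hsin : sin φ ≤ sin θ := sin_le_sin_of_le_of_le_pi_div_two (by linarith) hθ hφθ
  rw [cot_eq_cos_div_sin]
  exact div_le_div_of_nonneg_left hcφ hsφ hsin

end Real

theorem theta_one_lower_bound_general
    (γ θ θ₁ : ℝ)
    (hγ2 : γ ≤ Real.pi)
    (hθ : θ ∈ Set.Ioc 0 (Real.pi / 2))
    (hθ₁ : θ₁ ∈ Set.Ioc 0 (Real.pi / 2))
    (hcot : Real.cot θ₁ = -Real.cos γ * Real.cot θ + Real.sin γ) :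
    θ + γ - Real.pi ≤ θ₁ := by
  obtain ⟨hθ0, hθπ⟩ := hθ
  obtain ⟨hθ₁0, hθ₁π⟩ := hθ₁
  set φ := θ + γ - π with hφ
  rcases le_or_gt φ 0 with hφ0 | hφ0
  · linarith
  have hsθ : sin θ ≠ 0 := (sin_pos_of_pos_of_lt_pi hθ0 (by linarith [pi_pos])).ne'
  have hcot' : cot θ₁ = cos φ / sin θ := by
    rw [hcot, hφ, cos_add_sub_pi, cot_eq_cos_div_sin]
    field_simp
  have hle : cot θ₁ ≤ cot φ := hcot' ▸ cos_div_sin_le_cot hφ0 (by linarith) hθπ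
  by_contra! hlt
  exact hle.not_gt <| strictAntiOn_cot ⟨hθ₁0, by linarith [pi_pos]⟩
    ⟨hφ0, by linarith [pi_pos]⟩ hlt

/-- For `π/2 ≤ γ ≤ π` and `θ ∈ (0, π/2]`, if `θ₁ ∈ (0, π/2]` satisfies
`cot θ₁ = −cos γ·cot θ + sin γ`, then `θ₁ ≥ θ + γ − π`. -/
theorem theta_one_lower_bound
    (γ θ θ₁ : ℝ)
    (hγ1 : Real.pi / 2 ≤ γ) (hγ2 : γ ≤ Real.pi)
    (hθ : θ ∈ Set.Ioc 0 (Real.pi / 2))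
    (hθ₁ : θ₁ ∈ Set.Ioc 0 (Real.pi / 2))
    (hcot : Real.cot θ₁ = -Real.cos γ * Real.cot θ + Real.sin γ) :
    θ + γ - Real.pi ≤ θ₁ :=
  theta_one_lower_bound_general γ θ θ₁ hγ2 hθ hθ₁ hcot
end

section
/- Let π/2 ≤ γ ≤ π and let g : (0, π/2] → [0, ∞) be a nonincreasing function. For each θ ∈ (0, π/2], let θ₁ ∈ (0, π/2] be the unique angle satisfying cot θ₁ = −cos γ·cot θ + sin γ. Then g(θ)·cos(θ + γ/2) + g(θ₁)·cos(θ₁ − γ/2) ≥ 0. -/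
/-!
By the addition formula the defining relation reads `cot θ₁ = -cos (θ + γ) / sin θ`. Since
`cos (θ₁ - γ/2) ≥ 0`, only the case `cos (θ + γ/2) < 0` needs work. There
`cos θ + cos (θ + γ) = 2 cos (θ + γ/2) cos (γ/2) ≤ 0` gives `cot θ ≤ cot θ₁`, i.e. `θ₁ ≤ θ`, so
`g θ ≤ g θ₁`; and comparing `cot θ₁` with `cot (θ + γ - π)` gives `θ - θ₁ + γ ≤ π`, which makes
both factors of `cos (θ + γ/2) + cos (θ₁ - γ/2) = 2 cos ((θ + θ₁)/2) cos ((θ - θ₁ + γ)/2)`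
nonnegative. Hence `g θ cos (θ + γ/2) + g θ₁ cos (θ₁ - γ/2) ≥ g θ (cos (θ + γ/2) + cos (θ₁ - γ/2))
≥ 0`.
-/

open Real Set

namespace Real

theorem neg_cos_mul_cot_add_sin {θ : ℝ} (hθ : sin θ ≠ 0) (γ : ℝ) :
    -cos γ * cot θ + sin γ = -cos (θ + γ) / sin θ := by
  rw [cot_eq_cos_div_sin, cos_add]
  field_simp
  ring

theorem cos_add_cos_nonneg {x y : ℝ} (h₁ : -π ≤ x + y) (h₂ : x + y ≤ π) (h₃ : -π ≤ x - y)
    (h₄ : x - y ≤ π) : 0 ≤ cos x + cos y := by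
  rw [cos_add_cos]
  have := cos_nonneg_of_mem_Icc (x := (x + y) / 2) ⟨by linarith, by linarith⟩
  have := cos_nonneg_of_mem_Icc (x := (x - y) / 2) ⟨by linarith, by linarith⟩
  positivity

end Real

section CotRelation

variable {γ θ θ₁ : ℝ}

theorem le_of_cot_eq_of_cos_add_half_nonpos (hθ : θ ∈ Ioo 0 π) (hθ₁ : θ₁ ∈ Ioo 0 π)
    (hγ₁ : -π ≤ γ) (hγ₂ : γ ≤ π) (hcot : cot θ₁ = -cos (θ + γ) / sin θ)
    (hA : cos (θ + γ / 2) ≤ 0) : θ₁ ≤ θ := by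
  have hsθ : 0 < sin θ := sin_pos_of_pos_of_lt_pi hθ.1 hθ.2
  have hsum : cos θ + cos (θ + γ) ≤ 0 := by
    rw [cos_add_cos, show (θ + (θ + γ)) / 2 = θ + γ / 2 by ring,
      show (θ - (θ + γ)) / 2 = -(γ / 2) by ring, cos_neg]
    have : 0 ≤ cos (γ / 2) := cos_nonneg_of_mem_Icc ⟨by linarith, by linarith⟩
    nlinarith
  have hcot_le : cot θ ≤ cot θ₁ := by
    rw [hcot, cot_eq_cos_div_sin]
    exact div_le_div_of_nonneg_right (by linarith) hsθ.le
  exact (strictAntiOn_cot.le_iff_ge hθ hθ₁).mp hcot_le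

theorem add_sub_pi_le_of_cot_eq (hθ : θ ∈ Ioc 0 (π / 2)) (hθ₁ : θ₁ ∈ Ioo 0 π) (hγ : γ ≤ π)
    (hcot : cot θ₁ = -cos (θ + γ) / sin θ) : θ + γ - π ≤ θ₁ := by
  set x := θ + γ - π
  rcases le_or_gt x 0 with hx0 | hx0
  · linarith [hθ₁.1]
  obtain ⟨hθ0, hθπ⟩ := hθ
  have hsx : 0 < sin x := sin_pos_of_pos_of_lt_pi hx0 (by linarith)
  have hcx : 0 ≤ cos x := cos_nonneg_of_mem_Icc ⟨by linarith, by linarith⟩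
  have hsin_le : sin x ≤ sin θ := sin_le_sin_of_le_of_le_pi_div_two (by linarith) hθπ (by linarith)
  have hcot_le : cot θ₁ ≤ cot x := by
    rw [hcot, show θ + γ = x + π by ring, cos_add_pi, neg_neg, cot_eq_cos_div_sin]
    exact div_le_div_of_nonneg_left hcx hsx hsin_le
  exact (strictAntiOn_cot.le_iff_ge hθ₁ ⟨hx0, by linarith⟩).mp hcot_le

end CotRelation

/-- For `π/2 ≤ γ ≤ π`, a nonincreasing nonnegative `g` on `(0, π/2]`, `θ ∈ (0, π/2]`,
and `θ₁ ∈ (0, π/2]` with `cot θ₁ = −cos γ·cot θ + sin γ`, one has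
`g(θ)·cos(θ + γ/2) + g(θ₁)·cos(θ₁ − γ/2) ≥ 0`. -/
theorem g_cos_combination_nonneg
    (γ θ θ₁ : ℝ) (g : ℝ → ℝ)
    (hγ1 : Real.pi / 2 ≤ γ) (hγ2 : γ ≤ Real.pi)
    (hg : AntitoneOn g (Set.Ioc 0 (Real.pi / 2)))
    (hg0 : ∀ x ∈ Set.Ioc 0 (Real.pi / 2), 0 ≤ g x)
    (hθ : θ ∈ Set.Ioc 0 (Real.pi / 2))
    (hθ₁ : θ₁ ∈ Set.Ioc 0 (Real.pi / 2))
    (hcot : Real.cot θ₁ = -Real.cos γ * Real.cot θ + Real.sin γ) :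
    0 ≤ g θ * Real.cos (θ + γ / 2) + g θ₁ * Real.cos (θ₁ - γ / 2) := by
  have hπ := pi_pos
  have hθ' : θ ∈ Ioo 0 π := ⟨hθ.1, by linarith [hθ.2]⟩
  have hθ₁' : θ₁ ∈ Ioo 0 π := ⟨hθ₁.1, by linarith [hθ₁.2]⟩
  rw [neg_cos_mul_cot_add_sin (sin_pos_of_pos_of_lt_pi hθ'.1 hθ'.2).ne'] at hcot
  have hB : 0 ≤ cos (θ₁ - γ / 2) :=
    cos_nonneg_of_mem_Icc ⟨by linarith [hθ₁.1], by linarith [hθ₁.2]⟩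
  have hgθ := hg0 θ hθ
  rcases le_or_gt 0 (cos (θ + γ / 2)) with hA | hA
  · have := hg0 θ₁ hθ₁
    positivity
  have hle : θ₁ ≤ θ :=
    le_of_cot_eq_of_cos_add_half_nonpos hθ' hθ₁' (by linarith) hγ2 hcot hA.le
  have hle' : θ + γ - π ≤ θ₁ := add_sub_pi_le_of_cot_eq hθ hθ₁' hγ2 hcot
  have hsum : 0 ≤ cos (θ + γ / 2) + cos (θ₁ - γ / 2) :=
    cos_add_cos_nonneg (by linarith [hθ.1, hθ₁.1]) (by linarith [hθ.2, hθ₁.2]) (by linarith) (by linarith)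
  have hgle : g θ ≤ g θ₁ := hg hθ₁ hθ hle
  nlinarith [mul_nonneg (sub_nonneg.2 hgle) hB, mul_nonneg hgθ hsum]
end

section
/- Let π ≤ β ≤ 2π and π/2 ≤ γ ≤ π with 3π/2 ≤ β + γ ≤ 2π. For each θ ∈ [π/2, (β − γ + π)/2] with 0 < β − θ < π, let θ₁ ∈ (0, π) be the unique angle satisfying cot θ₁ = −cos(β+γ)·cot(β−θ) − sin(β+γ). Then θ₁ ≥ θ + γ − π. -/
open Real Set

/-!
With `x = β - θ` and `t = θ + γ - π`, the addition formula turns the defining relation into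
`cot θ₁ = cos t / sin x`. When `t > 0`, the constraints on `θ` give `t ≤ x` and `t + x ≤ π`, hence
`0 < sin t ≤ sin x` and `cos t ≥ 0`, so `cot θ₁ ≤ cot t`; since `cot` is decreasing on `(0, π)`,
`t ≤ θ₁`.
-/

namespace Real

theorem sin_le_sin_of_le_of_add_le_pi {t x : ℝ} (ht : 0 ≤ t) (htx : t ≤ x)
    (hsum : t + x ≤ π) : sin t ≤ sin x := by
  rcases le_total x (π / 2) with hx | hx
  · exact sin_le_sin_of_le_of_le_pi_div_two (by linarith) hx htx
  · rw [← sin_pi_sub x]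
    exact sin_le_sin_of_le_of_le_pi_div_two (by linarith) (by linarith) (by linarith)

theorem neg_cos_mul_cot_sub_sin {a x : ℝ} (hx : sin x ≠ 0) :
    -cos a * cot x - sin a = cos (a - π - x) / sin x := by
  rw [cot_eq_cos_div_sin, sub_right_comm, cos_sub_pi, cos_sub]
  field_simp
  ring

end Real

theorem theta_one_lower_bound_B3_general
    (β γ θ θ₁ : ℝ)
    (hsum2 : β + γ ≤ 2 * Real.pi)
    (hθ : θ ∈ Set.Icc (Real.pi / 2) ((β - γ + Real.pi) / 2))
    (hβθ1 : 0 < β - θ) (hβθ2 : β - θ < Real.pi)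
    (hθ₁ : θ₁ ∈ Set.Ioo 0 Real.pi)
    (hcot : Real.cot θ₁ = -Real.cos (β + γ) * Real.cot (β - θ) - Real.sin (β + γ)) :
    θ + γ - Real.pi ≤ θ₁ := by
  set t := θ + γ - π
  rcases le_or_gt t 0 with ht | ht
  · linarith [hθ₁.1]
  have htx : t ≤ β - θ := by linarith [hθ.2]
  have hsin_t : 0 < sin t := sin_pos_of_pos_of_lt_pi ht (by linarith)
  have hsin_x : 0 < sin (β - θ) := sin_pos_of_pos_of_lt_pi hβθ1 hβθ2
  have hcos_t : 0 ≤ cos t := cos_nonneg_of_mem_Icc ⟨by linarith, by linarith⟩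
  have hcot_le : cot θ₁ ≤ cot t := calc
    cot θ₁ = cos t / sin (β - θ) := by
      rw [hcot, neg_cos_mul_cot_sub_sin hsin_x.ne', show β + γ - π - (β - θ) = t by ring]
    _ ≤ cos t / sin t :=
      div_le_div_of_nonneg_left hcos_t hsin_t
        (sin_le_sin_of_le_of_add_le_pi ht.le htx (by linarith))
    _ = cot t := (cot_eq_cos_div_sin t).symm
  exact (strictAntiOn_cot.le_iff_ge hθ₁ ⟨ht, by linarith⟩).1 hcot_le

/-- For `π ≤ β ≤ 2π`, `π/2 ≤ γ ≤ π` with `3π/2 ≤ β + γ ≤ 2π`, and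
`θ ∈ [π/2, (β − γ + π)/2]` with `0 < β − θ < π`, if `θ₁ ∈ (0, π)` satisfies
`cot θ₁ = −cos(β+γ)·cot(β−θ) − sin(β+γ)`, then `θ₁ ≥ θ + γ − π`. -/
theorem theta_one_lower_bound_B3
    (β γ θ θ₁ : ℝ)
    (hβ1 : Real.pi ≤ β) (hβ2 : β ≤ 2 * Real.pi)
    (hγ1 : Real.pi / 2 ≤ γ) (hγ2 : γ ≤ Real.pi)
    (hsum1 : 3 * Real.pi / 2 ≤ β + γ) (hsum2 : β + γ ≤ 2 * Real.pi)
    (hθ : θ ∈ Set.Icc (Real.pi / 2) ((β - γ + Real.pi) / 2))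
    (hβθ1 : 0 < β - θ) (hβθ2 : β - θ < Real.pi)
    (hθ₁ : θ₁ ∈ Set.Ioo 0 Real.pi)
    (hcot : Real.cot θ₁ = -Real.cos (β + γ) * Real.cot (β - θ) - Real.sin (β + γ)) :
    θ + γ - Real.pi ≤ θ₁ :=
  theta_one_lower_bound_B3_general β γ θ θ₁ hsum2 hθ hβθ1 hβθ2 hθ₁ hcot
end

section
/- For every real c with (4√2 − 5)/(64·(5√2 − 7)) ≤ c ≤ 1/4 and every t ∈ [2 − √2, 1], one has 1 − t² − 4c·t²·(2 − t²)·(2 − t)² ≤ 0. -/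
/-!
On `[2 - √2, 1]` the weight `F t = 4 t² (2 - t²) (2 - t)²` is nonnegative, so the left-hand side
decreases in `c` and it suffices to treat the threshold `c₀ = (4√2 - 5) / (64 (5√2 - 7))`.
After clearing the denominator, `(4√2 - 5) F t - 64 (5√2 - 7) (1 - t²)` vanishes at `t = 2 - √2`,
and its quotient by `t - (2 - √2)` is a quintic that stays nonnegative on the interval.
-/

open Real Set

lemma sqrt_two_mem_Icc : √2 ∈ Icc (1.414 : ℝ) 1.415 := by
  constructor
  · rw [le_sqrt] <;> norm_num
  · rw [sqrt_le_left] <;> norm_num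

lemma weight_nonneg {t : ℝ} (ht : t ∈ Icc (2 - √2) 1) :
    0 ≤ 4 * t ^ 2 * (2 - t ^ 2) * (2 - t) ^ 2 := by
  have ht0 : 0 ≤ t := by linarith [ht.1, sqrt_two_mem_Icc.2]
  have : 0 ≤ 2 - t ^ 2 := by nlinarith [ht.2]
  positivity

lemma cofactor_nonneg {t : ℝ} (ht : t ∈ Icc (2 - √2) 1) :
    0 ≤ (96 * √2 - 128) + (32 * √2 - 32) * t + (160 - 128 * √2) * t ^ 2
      + (12 * √2 - 8) * t ^ 4 + (20 - 16 * √2) * t ^ 5 := by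
  obtain ⟨hlo, hhi⟩ := ht
  obtain ⟨hs1, hs2⟩ := sqrt_two_mem_Icc
  have hu : 0 ≤ t - (2 - √2) := by linarith
  have hv : 0 ≤ 1 - t := by linarith
  have ht0 : 0 ≤ t := by linarith
  nlinarith [mul_nonneg hu hv, mul_nonneg (mul_nonneg hu hv) ht0,
    mul_nonneg (mul_nonneg (mul_nonneg hu hv) ht0) ht0,
    mul_nonneg (mul_nonneg (mul_nonneg (mul_nonneg hu hv) ht0) ht0) ht0,
    mul_nonneg hu hu, mul_nonneg hv hv, sq_nonneg t, mul_nonneg (mul_nonneg hv hv) ht0]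

lemma threshold_gap_eq (t : ℝ) :
    (4 * √2 - 5) * (4 * t ^ 2 * (2 - t ^ 2) * (2 - t) ^ 2) - 64 * (5 * √2 - 7) * (1 - t ^ 2)
      = (t - (2 - √2)) * ((96 * √2 - 128) + (32 * √2 - 32) * t + (160 - 128 * √2) * t ^ 2
        + (12 * √2 - 8) * t ^ 4 + (20 - 16 * √2) * t ^ 5) := by
  linear_combination (16 * t ^ 5 - 12 * t ^ 4 + 128 * t ^ 2 - 32 * t - 96) * sq_sqrt zero_le_two

lemma one_sub_sq_le_threshold_mul {t : ℝ} (ht : t ∈ Icc (2 - √2) 1) :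
    1 - t ^ 2 ≤ (4 * √2 - 5) / (64 * (5 * √2 - 7)) * (4 * t ^ 2 * (2 - t ^ 2) * (2 - t) ^ 2) := by
  have hden : 0 < 64 * (5 * √2 - 7) := by linarith [sqrt_two_mem_Icc.1]
  have hgap := threshold_gap_eq t
  have hprod := mul_nonneg (sub_nonneg.2 ht.1) (cofactor_nonneg ht)
  rw [div_mul_eq_mul_div, le_div_iff₀ hden]
  linarith

theorem w_nonpositive_general
    (c t : ℝ)
    (hc1 : (4 * Real.sqrt 2 - 5) / (64 * (5 * Real.sqrt 2 - 7)) ≤ c)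
    (ht : t ∈ Set.Icc (2 - Real.sqrt 2) 1) :
    1 - t ^ 2 - 4 * c * t ^ 2 * (2 - t ^ 2) * (2 - t) ^ 2 ≤ 0 := by
  have key : 1 - t ^ 2 ≤ c * (4 * t ^ 2 * (2 - t ^ 2) * (2 - t) ^ 2) :=
    (one_sub_sq_le_threshold_mul ht).trans (mul_le_mul_of_nonneg_right hc1 (weight_nonneg ht))
  linarith

/-- For every `c` with `(4√2 − 5)/(64·(5√2 − 7)) ≤ c ≤ 1/4` and every
`t ∈ [2 − √2, 1]`, one has `1 − t² − 4c·t²·(2 − t²)·(2 − t)² ≤ 0`. -/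
theorem w_nonpositive
    (c t : ℝ)
    (hc1 : (4 * Real.sqrt 2 - 5) / (64 * (5 * Real.sqrt 2 - 7)) ≤ c)
    (hc2 : c ≤ 1 / 4)
    (ht : t ∈ Set.Icc (2 - Real.sqrt 2) 1) :
    1 - t ^ 2 - 4 * c * t ^ 2 * (2 - t ^ 2) * (2 - t) ^ 2 ≤ 0 :=
  w_nonpositive_general c t hc1 ht
end
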